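/- arXiv:2102.02095 — 6 statements merged into one kernel-verified Lean document; each statement's English description precedes it below -/
import Mathlib

section
/- Let β > 0, α, δ ∈ ℝ, r ∈ ℝ, L > 0, T > 0, and let k be a controller backstepping kernel with parameter r. Suppose u : [0,L]×[0,T] → ℂ is smooth, satisfies i u_t + iβ u_{xxx} + α u_{xx} + iδ u_x = 0 on (0,L)×(0,T), and u(0,t) = 0 for all t ∈ [0,T]. Define w(x,t) := u(x,t) − ∫₀ˣ k(x,y) u(y,t) dy. Then for all (x,t) ∈ [0,L]×[0,T]: i w_t + iβ w_{xxx} + α w_{xx} + iδ w_x + i r w = iβ k_y(x,0) u_x(0,t); moreover w(0,t) = 0 and w_x(0,t) = u_x(0,t) for all t. If, in addition, u(L,t) = ∫₀ᴸ k(L,y) u(y,t) dy and u_x(L,t) = ∫₀ᴸ k_x(L,y) u(y,t) dy for all t, then also w(L,t) = 0 and w_x(L,t) = 0. -/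
noncomputable section

open MeasureTheory

/-- Partial derivative in the first variable. -/
def pd1 (f : ℝ → ℝ → ℂ) : ℝ → ℝ → ℂ := fun x y => deriv (fun x' => f x' y) x

/-- Partial derivative in the second variable. -/
def pd2 (f : ℝ → ℝ → ℂ) : ℝ → ℝ → ℂ := fun x y => deriv (fun y' => f x y') y

section BacksteppingHelpers
open Set Metric Filter intervalIntegral


lemma pd1_hasDerivAt {f : ℝ → ℝ → ℂ} {S : Set (ℝ × ℝ)} (hS : IsOpen S) {n : WithTop ℕ∞}
    (hf : ContDiffOn ℝ n (Function.uncurry f) S) (hn : 1 ≤ n) {x y : ℝ} (h : (x, y) ∈ S) :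
    HasDerivAt (fun x' => f x' y) (pd1 f x y) x := by
  have hd : DifferentiableAt ℝ (Function.uncurry f) (x, y) :=
    (hf.contDiffAt (hS.mem_nhds h)).differentiableAt (lt_of_lt_of_le zero_lt_one hn).ne'
  have H : HasDerivAt (fun x' => f x' y)
      (fderiv ℝ (Function.uncurry f) (x, y) (1, 0)) x :=
    (hd.hasFDerivAt.comp_hasDerivAt x ((hasDerivAt_id' (x := x)).prodMk (hasDerivAt_const x y)) :)
  simpa [pd1] using hasDerivAt_deriv_iff.mpr H.differentiableAt

lemma pd1_eq_fderiv {f : ℝ → ℝ → ℂ} {S : Set (ℝ × ℝ)} (hS : IsOpen S) {n : WithTop ℕ∞}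
    (hf : ContDiffOn ℝ n (Function.uncurry f) S) (hn : 1 ≤ n) {x y : ℝ} (h : (x, y) ∈ S) :
    pd1 f x y = fderiv ℝ (Function.uncurry f) (x, y) (1, 0) := by
  have hd : DifferentiableAt ℝ (Function.uncurry f) (x, y) :=
    (hf.contDiffAt (hS.mem_nhds h)).differentiableAt (lt_of_lt_of_le zero_lt_one hn).ne'
  have H : HasDerivAt (fun x' => f x' y)
      (fderiv ℝ (Function.uncurry f) (x, y) (1, 0)) x :=
    (hd.hasFDerivAt.comp_hasDerivAt x ((hasDerivAt_id' (x := x)).prodMk (hasDerivAt_const x y)) :)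
  exact H.deriv

lemma pd2_hasDerivAt {f : ℝ → ℝ → ℂ} {S : Set (ℝ × ℝ)} (hS : IsOpen S) {n : WithTop ℕ∞}
    (hf : ContDiffOn ℝ n (Function.uncurry f) S) (hn : 1 ≤ n) {x y : ℝ} (h : (x, y) ∈ S) :
    HasDerivAt (fun y' => f x y') (pd2 f x y) y := by
  have hd : DifferentiableAt ℝ (Function.uncurry f) (x, y) :=
    (hf.contDiffAt (hS.mem_nhds h)).differentiableAt (lt_of_lt_of_le zero_lt_one hn).ne'
  have H : HasDerivAt (fun y' => f x y')
      (fderiv ℝ (Function.uncurry f) (x, y) (0, 1)) y :=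
    hd.hasFDerivAt.comp_hasDerivAt y ((hasDerivAt_const y x).prodMk (hasDerivAt_id y))
  simpa [pd2] using hasDerivAt_deriv_iff.mpr H.differentiableAt

lemma pd2_eq_fderiv {f : ℝ → ℝ → ℂ} {S : Set (ℝ × ℝ)} (hS : IsOpen S) {n : WithTop ℕ∞}
    (hf : ContDiffOn ℝ n (Function.uncurry f) S) (hn : 1 ≤ n) {x y : ℝ} (h : (x, y) ∈ S) :
    pd2 f x y = fderiv ℝ (Function.uncurry f) (x, y) (0, 1) := by
  have hd : DifferentiableAt ℝ (Function.uncurry f) (x, y) :=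
    (hf.contDiffAt (hS.mem_nhds h)).differentiableAt (lt_of_lt_of_le zero_lt_one hn).ne'
  have H : HasDerivAt (fun y' => f x y')
      (fderiv ℝ (Function.uncurry f) (x, y) (0, 1)) y :=
    hd.hasFDerivAt.comp_hasDerivAt y ((hasDerivAt_const y x).prodMk (hasDerivAt_id y))
  exact H.deriv

lemma contDiffOn_pd1 {f : ℝ → ℝ → ℂ} {S : Set (ℝ × ℝ)} (hS : IsOpen S) {n m : WithTop ℕ∞}
    (hf : ContDiffOn ℝ n (Function.uncurry f) S) (hmn : m + 1 ≤ n) :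
    ContDiffOn ℝ m (Function.uncurry (pd1 f)) S := by
  have h1 : ContDiffOn ℝ m (fun p => fderiv ℝ (Function.uncurry f) p (1, 0)) S :=
    (hf.fderiv_of_isOpen hS hmn).clm_apply contDiffOn_const
  exact h1.congr fun p hp => by
    have := pd1_eq_fderiv hS hf (le_trans le_add_self hmn) (x := p.1) (y := p.2) (by simpa using hp)
    simpa [Function.uncurry] using this

lemma contDiffOn_pd2 {f : ℝ → ℝ → ℂ} {S : Set (ℝ × ℝ)} (hS : IsOpen S) {n m : WithTop ℕ∞}
    (hf : ContDiffOn ℝ n (Function.uncurry f) S) (hmn : m + 1 ≤ n) :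
    ContDiffOn ℝ m (Function.uncurry (pd2 f)) S := by
  have h1 : ContDiffOn ℝ m (fun p => fderiv ℝ (Function.uncurry f) p (0, 1)) S :=
    (hf.fderiv_of_isOpen hS hmn).clm_apply contDiffOn_const
  exact h1.congr fun p hp => by
    have := pd2_eq_fderiv hS hf (le_trans le_add_self hmn) (x := p.1) (y := p.2) (by simpa using hp)
    simpa [Function.uncurry] using this


/-- Mixed partials commute for C² functions on an open set. -/
lemma pd_comm {f : ℝ → ℝ → ℂ} {S : Set (ℝ × ℝ)} (hS : IsOpen S) {n : WithTop ℕ∞}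
    (hf : ContDiffOn ℝ n (Function.uncurry f) S) (hn : 2 ≤ n) {x y : ℝ} (h : (x, y) ∈ S) :
    pd2 (pd1 f) x y = pd1 (pd2 f) x y := by
  set F := Function.uncurry f with hF
  set g := fderiv ℝ F with hg
  have hn1 : (1 : WithTop ℕ∞) ≤ n := le_trans (by norm_num) hn
  have hg1 : ContDiffOn ℝ 1 g S := hf.fderiv_of_isOpen hS (by exact_mod_cast hn)
  have hgd : DifferentiableAt ℝ g (x, y) :=
    (hg1.contDiffAt (hS.mem_nhds h)).differentiableAt one_ne_zero
  have hsymm : IsSymmSndFDerivAt ℝ F (x, y) :=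
    (hf.contDiffAt (hS.mem_nhds h)).isSymmSndFDerivAt (by simpa [minSmoothness_of_isRCLikeNormedField] using hn)
  -- compute pd2 (pd1 f) x y
  have e1 : pd2 (pd1 f) x y = fderiv ℝ g (x, y) (0, 1) (1, 0) := by
    have hev : (fun y' => pd1 f x y') =ᶠ[nhds y] fun y' => g (x, y') (1, 0) := by
      have : ∀ᶠ y' in nhds y, (x, y') ∈ S :=
        (Continuous.prodMk continuous_const continuous_id).continuousAt.preimage_mem_nhds
          (hS.mem_nhds h)
      filter_upwards [this] with y' hy' using pd1_eq_fderiv hS hf hn1 hy'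
    have h1 : HasDerivAt (fun y' => g (x, y')) (fderiv ℝ g (x, y) (0, 1)) y :=
      hgd.hasFDerivAt.comp_hasDerivAt y ((hasDerivAt_const y x).prodMk (hasDerivAt_id y))
    have h2 : HasDerivAt (fun y' => g (x, y') (1, 0))
        (fderiv ℝ g (x, y) (0, 1) (1, 0)) y := by
      simpa using h1.clm_apply (hasDerivAt_const y ((1:ℝ), (0:ℝ)))
    calc pd2 (pd1 f) x y = deriv (fun y' => pd1 f x y') y := rfl
      _ = deriv (fun y' => g (x, y') (1, 0)) y := hev.deriv_eq
      _ = _ := h2.deriv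
  have e2 : pd1 (pd2 f) x y = fderiv ℝ g (x, y) (1, 0) (0, 1) := by
    have hev : (fun x' => pd2 f x' y) =ᶠ[nhds x] fun x' => g (x', y) (0, 1) := by
      have : ∀ᶠ x' in nhds x, (x', y) ∈ S :=
        (Continuous.prodMk continuous_id continuous_const).continuousAt.preimage_mem_nhds
          (hS.mem_nhds h)
      filter_upwards [this] with x' hx' using pd2_eq_fderiv hS hf hn1 hx'
    have h1 : HasDerivAt (fun x' => g (x', y)) (fderiv ℝ g (x, y) (1, 0)) x :=
      hgd.hasFDerivAt.comp_hasDerivAt x ((hasDerivAt_id x).prodMk (hasDerivAt_const x y))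
    have h2 : HasDerivAt (fun x' => g (x', y) (0, 1))
        (fderiv ℝ g (x, y) (1, 0) (0, 1)) x := by
      simpa using h1.clm_apply (hasDerivAt_const x ((0:ℝ), (1:ℝ)))
    calc pd1 (pd2 f) x y = deriv (fun x' => pd2 f x' y) x := rfl
      _ = deriv (fun x' => g (x', y) (0, 1)) x := hev.deriv_eq
      _ = _ := h2.deriv
  rw [e1, e2]
  exact hsymm.eq _ _

/-- Derivative along the diagonal. -/
lemma diag_hasDerivAt {f : ℝ → ℝ → ℂ} {S : Set (ℝ × ℝ)} (hS : IsOpen S) {n : WithTop ℕ∞}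
    (hf : ContDiffOn ℝ n (Function.uncurry f) S) (hn : 1 ≤ n) {x : ℝ} (h : (x, x) ∈ S) :
    HasDerivAt (fun x' => f x' x') (pd1 f x x + pd2 f x x) x := by
  have hd : DifferentiableAt ℝ (Function.uncurry f) (x, x) :=
    (hf.contDiffAt (hS.mem_nhds h)).differentiableAt (lt_of_lt_of_le zero_lt_one hn).ne'
  have hdiag : HasDerivAt (fun x' => ((x' : ℝ), (x' : ℝ))) ((1 : ℝ), (1 : ℝ)) x :=
    (hasDerivAt_id x).prodMk (hasDerivAt_id x)
  have H : HasDerivAt (fun x' => f x' x')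
      (fderiv ℝ (Function.uncurry f) (x, x) (1, 1)) x :=
    HasFDerivAt.comp_hasDerivAt (f := fun x' => ((x':ℝ), (x':ℝ))) x hd.hasFDerivAt hdiag
  have : fderiv ℝ (Function.uncurry f) (x, x) (1, 1)
      = pd1 f x x + pd2 f x x := by
    rw [pd1_eq_fderiv hS hf hn h, pd2_eq_fderiv hS hf hn h,
      show ((1:ℝ), (1:ℝ)) = ((1:ℝ), (0:ℝ)) + ((0:ℝ), (1:ℝ)) by simp, map_add]
  rwa [this] at H

/-- continuity boundary extension along an interval -/
lemma eq_on_closure_Icc {h : ℝ → ℂ} {a b x c : ℝ} (hab : a < b) (hx : x ∈ Set.Icc a b)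
    (hc : ContinuousAt h x) (h0 : ∀ y ∈ Set.Ioo a b, h y = c) : h x = c := by
  have hxc : x ∈ closure (Set.Ioo a b) := by rwa [closure_Ioo hab.ne]
  have hne : (nhdsWithin x (Set.Ioo a b)).NeBot := mem_closure_iff_nhdsWithin_neBot.1 hxc
  have h1 : Tendsto h (nhdsWithin x (Set.Ioo a b)) (nhds (h x)) := hc.continuousWithinAt.tendsto
  have h2 : Tendsto h (nhdsWithin x (Set.Ioo a b)) (nhds c) := by
    refine Filter.Tendsto.congr' ?_ tendsto_const_nhds
    filter_upwards [self_mem_nhdsWithin] with y hy using (h0 y hy).symm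
  exact tendsto_nhds_unique h1 h2

/-- Differentiation under the interval integral, for a parameter moving in an open set. -/
lemma param_hasDerivAt (G : ℝ → ℝ → ℂ) {S : Set (ℝ × ℝ)} (hS : IsOpen S)
    (hG : ContDiffOn ℝ 1 (Function.uncurry G) S) (b s₀ η : ℝ) (hη : 0 < η)
    (hmem : ∀ s : ℝ, |s - s₀| ≤ η → ∀ y ∈ Set.uIcc (0:ℝ) b, (s, y) ∈ S) :
    HasDerivAt (fun s => ∫ y in (0:ℝ)..b, G s y) (∫ y in (0:ℝ)..b, pd1 G s₀ y) s₀ := by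
  have hmem' : ∀ s ∈ Metric.ball s₀ η, ∀ y ∈ Set.uIcc (0:ℝ) b, (s, y) ∈ S := by
    intro s hs y hy
    exact hmem s (le_of_lt (by simpa [Real.dist_eq] using hs)) y hy
  -- continuity of G and pd1 G on slices
  have hcontG : ContinuousOn (Function.uncurry G) S := hG.continuousOn
  have hcontG1 : ContinuousOn (Function.uncurry (pd1 G)) S :=
    (contDiffOn_pd1 (m := 0) hS hG (by rw [zero_add])).continuousOn
  have hsliceG : ∀ s : ℝ, |s - s₀| ≤ η → ContinuousOn (fun y => G s y) (Set.uIcc 0 b) := by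
    intro s hs
    have : ContinuousOn (fun y => Function.uncurry G (s, y)) (Set.uIcc 0 b) :=
      hcontG.comp (Continuous.continuousOn (by continuity)) (fun y hy => hmem s hs y hy)
    exact this
  have hsliceG1 : ContinuousOn (fun y => pd1 G s₀ y) (Set.uIcc 0 b) := by
    have : ContinuousOn (fun y => Function.uncurry (pd1 G) (s₀, y)) (Set.uIcc 0 b) :=
      hcontG1.comp (Continuous.continuousOn (by continuity))
        (fun y hy => hmem s₀ (by simpa using hη.le) y hy)
    exact this
  -- bound
  set R : Set (ℝ × ℝ) := Set.Icc (s₀ - η) (s₀ + η) ×ˢ Set.uIcc (0:ℝ) b with hR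
  have hRS : R ⊆ S := by
    rintro ⟨s, y⟩ ⟨hs, hy⟩
    exact hmem s (abs_sub_le_iff.2 ⟨by linarith [hs.2], by linarith [hs.1]⟩) y hy
  have hRc : IsCompact R := isCompact_Icc.prod isCompact_uIcc
  obtain ⟨C, hC⟩ := hRc.exists_bound_of_continuousOn (hcontG1.mono hRS)
  apply (intervalIntegral.hasDerivAt_integral_of_dominated_loc_of_deriv_le (F := G)
    (F' := fun s y => pd1 G s y) (bound := fun _ => C) (Metric.ball_mem_nhds s₀ hη) ?_ ?_ ?_ ?_ ?_ ?_).2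
  · filter_upwards [Metric.ball_mem_nhds s₀ hη] with s hs
    exact ((hsliceG s (le_of_lt (by simpa [Real.dist_eq] using hs))).mono
      Set.uIoc_subset_uIcc).aestronglyMeasurable measurableSet_uIoc
  · exact ((hsliceG s₀ (by simpa using hη.le)).intervalIntegrable)
  · exact (hsliceG1.mono Set.uIoc_subset_uIcc).aestronglyMeasurable measurableSet_uIoc
  · refine Filter.Eventually.of_forall fun y hy => fun s hs => ?_
    have : ((s, y) : ℝ × ℝ) ∈ R := by
      constructor
      · have := Metric.mem_ball.1 hs
        rw [Real.dist_eq] at this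
        constructor <;> [linarith [abs_sub_le_iff.1 this.le]; linarith [(abs_sub_le_iff.1 this.le).1]]
      · exact Set.uIoc_subset_uIcc hy
    simpa using hC _ this
  · exact intervalIntegrable_const
  · refine Filter.Eventually.of_forall fun y hy => fun s hs => ?_
    exact pd1_hasDerivAt hS hG le_rfl (hmem' s hs y (Set.uIoc_subset_uIcc hy))

/-- Leibniz rule for `x ↦ ∫_0^x f(x,y) dy`. -/
lemma leibniz_hasDerivAt (f : ℝ → ℝ → ℂ) {S : Set (ℝ × ℝ)} (hS : IsOpen S)
    (hf : ContDiffOn ℝ 1 (Function.uncurry f) S) (x₀ η : ℝ) (hη : 0 < η)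
    (hmem : ∀ x' y' : ℝ, |x' - x₀| ≤ η → (∃ y ∈ Set.uIcc (0:ℝ) x₀, |y' - y| ≤ η) →
      (x', y') ∈ S) :
    HasDerivAt (fun x => ∫ y in (0:ℝ)..x, f x y)
      (f x₀ x₀ + ∫ y in (0:ℝ)..x₀, pd1 f x₀ y) x₀ := by
  have hx₀mem : x₀ ∈ Set.uIcc (0:ℝ) x₀ := Set.right_mem_uIcc
  have hmemA : ∀ x : ℝ, |x - x₀| ≤ η → ∀ y ∈ Set.uIcc (0:ℝ) x₀, (x, y) ∈ S := by
    intro x hx y hy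
    exact hmem x y hx ⟨y, hy, by simpa using hη.le⟩
  have hmemB : ∀ x : ℝ, |x - x₀| ≤ η → ∀ y ∈ Set.uIcc x₀ x, (x, y) ∈ S := by
    intro x hx y hy
    refine hmem x y hx ⟨x₀, hx₀mem, ?_⟩
    rcases Set.mem_uIcc.1 hy with h | h
    · have := abs_sub_le_iff.1 hx
      rw [abs_sub_le_iff]; constructor <;> linarith [this.1, this.2]
    · have := abs_sub_le_iff.1 hx
      rw [abs_sub_le_iff]; constructor <;> linarith [this.1, this.2]
  have hdiag : ((x₀ : ℝ), (x₀ : ℝ)) ∈ S := hmemA x₀ (by simpa using hη.le) x₀ hx₀mem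
  have hsliceA : ∀ x : ℝ, |x - x₀| ≤ η → IntervalIntegrable (fun y => f x y) volume 0 x₀ := by
    intro x hx
    apply ContinuousOn.intervalIntegrable
    exact hf.continuousOn.comp (Continuous.continuousOn (by continuity))
      (fun y hy => hmemA x hx y hy)
  have hsliceB : ∀ x : ℝ, |x - x₀| ≤ η → IntervalIntegrable (fun y => f x y) volume x₀ x := by
    intro x hx
    apply ContinuousOn.intervalIntegrable
    exact hf.continuousOn.comp (Continuous.continuousOn (by continuity))
      (fun y hy => hmemB x hx y hy)
  set φ : ℝ → ℂ := fun s => ∫ y in (0:ℝ)..x₀, f s y with hφ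
  set ψ : ℝ → ℂ := fun x => ∫ y in x₀..x, f x y with hψ
  have hball : ∀ᶠ x in nhds x₀, |x - x₀| ≤ η := by
    have := Metric.closedBall_mem_nhds x₀ hη
    filter_upwards [this] with x hx
    simpa [Real.dist_eq, Metric.mem_closedBall] using hx
  have heq : (fun x => φ x + ψ x) =ᶠ[nhds x₀] fun x => ∫ y in (0:ℝ)..x, f x y := by
    filter_upwards [hball] with x hx
    exact intervalIntegral.integral_add_adjacent_intervals (hsliceA x hx) (hsliceB x hx)
  have hφ' : HasDerivAt φ (∫ y in (0:ℝ)..x₀, pd1 f x₀ y) x₀ :=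
    param_hasDerivAt f hS hf x₀ x₀ η hη hmemA
  have hψ' : HasDerivAt ψ (f x₀ x₀) x₀ := by
    rw [hasDerivAt_iff_isLittleO, Asymptotics.isLittleO_iff]
    intro c hc
    have hca : ContinuousAt (Function.uncurry f) (x₀, x₀) :=
      hf.continuousOn.continuousAt (hS.mem_nhds hdiag)
    rcases Metric.continuousAt_iff.1 hca c hc with ⟨d, hd, hd'⟩
    filter_upwards [Metric.ball_mem_nhds x₀ (lt_min hd hη)] with x hxb
    have hx : |x - x₀| < min d η := by
      rw [← Real.dist_eq]; exact Metric.mem_ball.1 hxb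
    have hxη : |x - x₀| ≤ η := le_of_lt (lt_of_lt_of_le hx (min_le_right _ _))
    have hxd : |x - x₀| < d := lt_of_lt_of_le hx (min_le_left _ _)
    have hψx₀ : ψ x₀ = 0 := intervalIntegral.integral_same
    have hconst : (x - x₀) • f x₀ x₀ = ∫ _ in x₀..x, f x₀ x₀ := by
      rw [intervalIntegral.integral_const]
    have hsub : ψ x - ψ x₀ - (x - x₀) • f x₀ x₀
        = ∫ y in x₀..x, (f x y - f x₀ x₀) := by
      rw [hψx₀, hconst, sub_zero,
        intervalIntegral.integral_sub (hsliceB x hxη) intervalIntegrable_const]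
    rw [hsub]
    have hle : ∀ y ∈ Set.uIoc x₀ x, ‖f x y - f x₀ x₀‖ ≤ c := by
      intro y hy
      have hy' : y ∈ Set.uIcc x₀ x := Set.uIoc_subset_uIcc hy
      have hyx : |y - x₀| ≤ |x - x₀| := by
        rcases Set.mem_uIcc.1 hy' with h | h <;>
          · rw [abs_sub_le_iff]
            have := abs_sub_le_iff.1 (le_refl |x - x₀|)
            constructor <;> cases abs_cases (x - x₀) <;> linarith [h.1, h.2, abs_nonneg (x - x₀), le_abs_self (x - x₀), neg_abs_le (x - x₀)]
      have hdist : dist ((x, y) : ℝ × ℝ) (x₀, x₀) < d := by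
        rw [Prod.dist_eq]
        simp only [Real.dist_eq]
        exact max_lt hxd (lt_of_le_of_lt hyx hxd)
      have := hd' hdist
      simpa [Function.uncurry, dist_eq_norm] using this.le
    calc ‖∫ y in x₀..x, (f x y - f x₀ x₀)‖ ≤ c * |x - x₀| :=
          intervalIntegral.norm_integral_le_of_norm_le_const hle
      _ = c * ‖x - x₀‖ := by rw [Real.norm_eq_abs]
  have := (hφ'.add hψ').congr_of_eventuallyEq heq.symm
  simpa [add_comm] using this

end BacksteppingHelpers

/-- The closed triangle Δ̄ = {(x,y) : 0 ≤ y ≤ x ≤ L}. -/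
def Tri (L : ℝ) : Set (ℝ × ℝ) := {p | 0 ≤ p.2 ∧ p.2 ≤ p.1 ∧ p.1 ≤ L}

/-- Controller backstepping kernel with parameter `r`. -/
def IsCtrlKernel (β α δ r L : ℝ) (k : ℝ → ℝ → ℂ) : Prop :=
  (∃ U : Set (ℝ × ℝ), IsOpen U ∧ Tri L ⊆ U ∧ ContDiffOn ℝ 3 (Function.uncurry k) U) ∧
  (∀ p ∈ Tri L,
    (β : ℂ) * (pd1 (pd1 (pd1 k)) p.1 p.2 + pd2 (pd2 (pd2 k)) p.1 p.2)
      - Complex.I * (α : ℂ) * (pd1 (pd1 k) p.1 p.2 - pd2 (pd2 k) p.1 p.2)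
      + (δ : ℂ) * (pd1 k p.1 p.2 + pd2 k p.1 p.2) + (r : ℂ) * k p.1 p.2 = 0) ∧
  (∀ x ∈ Set.Icc (0 : ℝ) L,
    k x x = 0 ∧ k x 0 = 0 ∧ pd1 k x x = ((r * x / (3 * β) : ℝ) : ℂ))

set_option maxHeartbeats 4000000 in
theorem stmt10 (β α δ r L T : ℝ) (hβ : 0 < β) (hL : 0 < L) (hT : 0 < T)
    (k : ℝ → ℝ → ℂ) (hk : IsCtrlKernel β α δ r L k)
    (u : ℝ → ℝ → ℂ) (hu : ContDiff ℝ (⊤ : ℕ∞) (Function.uncurry u))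
    (hpde : ∀ x ∈ Set.Ioo (0:ℝ) L, ∀ t ∈ Set.Ioo (0:ℝ) T,
      Complex.I * pd2 u x t + Complex.I * (β : ℂ) * pd1 (pd1 (pd1 u)) x t
        + (α : ℂ) * pd1 (pd1 u) x t + Complex.I * (δ : ℂ) * pd1 u x t = 0)
    (hbc0 : ∀ t ∈ Set.Icc (0:ℝ) T, u 0 t = 0)
    (w : ℝ → ℝ → ℂ)
    (hwdef : ∀ x t : ℝ, w x t = u x t - ∫ y in (0:ℝ)..x, k x y * u y t) :
    (∀ x ∈ Set.Icc (0:ℝ) L, ∀ t ∈ Set.Icc (0:ℝ) T,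
      Complex.I * pd2 w x t + Complex.I * (β : ℂ) * pd1 (pd1 (pd1 w)) x t
        + (α : ℂ) * pd1 (pd1 w) x t + Complex.I * (δ : ℂ) * pd1 w x t
        + Complex.I * (r : ℂ) * w x t
        = Complex.I * (β : ℂ) * pd2 k x 0 * pd1 u 0 t) ∧
    (∀ t ∈ Set.Icc (0:ℝ) T, w 0 t = 0 ∧ pd1 w 0 t = pd1 u 0 t) ∧
    ((∀ t ∈ Set.Icc (0:ℝ) T,
        u L t = (∫ y in (0:ℝ)..L, k L y * u y t) ∧
        pd1 u L t = ∫ y in (0:ℝ)..L, pd1 k L y * u y t) →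
      ∀ t ∈ Set.Icc (0:ℝ) T, w L t = 0 ∧ pd1 w L t = 0) := by
  classical
  obtain ⟨⟨U, hUo, hTriU, hkU⟩, hkpde, hkbc⟩ := hk
  -- the triangle is compact
  have hTriClosed : IsClosed (Tri L) := by
    have h1 : IsClosed {p : ℝ × ℝ | 0 ≤ p.2} := isClosed_le continuous_const continuous_snd
    have h2 : IsClosed {p : ℝ × ℝ | p.2 ≤ p.1} := isClosed_le continuous_snd continuous_fst
    have h3 : IsClosed {p : ℝ × ℝ | p.1 ≤ L} := isClosed_le continuous_fst continuous_const
    exact h1.inter (h2.inter h3)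
  have hTriCompact : IsCompact (Tri L) := by
    refine (isCompact_Icc (a := ((0:ℝ), (0:ℝ))) (b := (L, L))).of_isClosed_subset hTriClosed ?_
    rintro ⟨a, b⟩ ⟨h1, h2, h3⟩
    exact ⟨⟨le_trans h1 h2, h1⟩, ⟨h3, le_trans h2 h3⟩⟩
  obtain ⟨ε, hε, hthick⟩ := hTriCompact.exists_thickening_subset_open hUo hTriU
  set S : Set (ℝ × ℝ) := Metric.thickening ε (Tri L) with hSdef
  have hS : IsOpen S := Metric.isOpen_thickening
  have hTriS : Tri L ⊆ S := Metric.self_subset_thickening hε _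
  have hk3 : ContDiffOn ℝ 3 (Function.uncurry k) S := hkU.mono hthick
  set η : ℝ := ε / 4 with hηdef
  have hη : 0 < η := by positivity
  -- membership of fattened triangle points in S
  have hmemS : ∀ a b a' b' : ℝ, -η ≤ a → a ≤ L + η → b ∈ Set.uIcc (0:ℝ) a →
      |a' - a| ≤ η → |b' - b| ≤ η → (a', b') ∈ S := by
    intro a b a' b' h1 h2 hb h3 h4
    set abar : ℝ := max 0 (min a L) with habar
    set bbar : ℝ := max 0 (min b abar) with hbbar
    have h0L : (0:ℝ) ≤ L := hL.le
    have hTri : ((abar, bbar) : ℝ × ℝ) ∈ Tri L := by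
      refine ⟨le_max_left _ _, ?_, ?_⟩
      · exact max_le (le_max_left _ _) (min_le_right _ _)
      · exact max_le h0L (min_le_right _ _)
    have hb1 : min 0 a ≤ b := (Set.mem_uIcc.1 hb).elim (fun h => le_trans (min_le_of_left_le h.1) le_rfl)
      (fun h => le_trans (min_le_of_right_le h.1) le_rfl)
    have hb1' : min 0 a ≤ b ∧ b ≤ max 0 a := by
      rcases Set.mem_uIcc.1 hb with h | h
      · exact ⟨le_trans (min_le_left _ _) h.1, le_trans h.2 (le_max_right _ _)⟩
      · exact ⟨le_trans (min_le_right _ _) h.1, le_trans h.2 (le_max_left _ _)⟩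
    have hxa : |a - abar| ≤ η := by
      rcases le_or_gt a 0 with h | h
      · have : abar = 0 := by
          rw [habar, min_eq_left (le_trans h h0L), max_eq_left h]
        rw [this, abs_sub_le_iff]
        constructor <;> linarith
      · rcases le_or_gt a L with h' | h'
        · have : abar = a := by rw [habar, min_eq_left h', max_eq_right h.le]
          rw [this]; simpa using hη.le
        · have : abar = L := by rw [habar, min_eq_right h'.le, max_eq_right h0L]
          rw [this, abs_sub_le_iff]
          constructor <;> linarith
    have hyb : |b - bbar| ≤ η := by
      have habar0 : (0:ℝ) ≤ abar := le_max_left _ _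
      rcases lt_or_ge b 0 with h | h
      · have hbb : bbar = 0 := by
          rw [hbbar, min_eq_left (le_trans h.le habar0), max_eq_left h.le]
        have ha0 : a < 0 := by
          by_contra hcon
          push_neg at hcon
          have : min 0 a = 0 := min_eq_left hcon
          rw [this] at hb1'
          linarith [hb1'.1]
        have : a ≤ b := by
          have : min 0 a = a := min_eq_right ha0.le
          rw [this] at hb1'
          exact hb1'.1
        rw [hbb, abs_sub_le_iff]
        constructor <;> linarith
      · rcases le_or_gt b abar with h' | h'
        · have : bbar = b := by rw [hbbar, min_eq_left h', max_eq_right h]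
          rw [this]; simpa using hη.le
        · have hbb : bbar = abar := by
            rw [hbbar, min_eq_right h'.le, max_eq_right habar0]
          have haL : L < a := by
            by_contra hcon
            push_neg at hcon
            rcases le_or_gt a 0 with h2' | h2'
            · have : max 0 a = 0 := max_eq_left h2'
              rw [this] at hb1'
              have : abar = 0 := by rw [habar, min_eq_left (le_trans h2' h0L), max_eq_left h2']
              rw [this] at h'
              linarith [hb1'.2]
            · have : abar = a := by rw [habar, min_eq_left hcon, max_eq_right h2'.le]
              rw [this] at h'
              have : max 0 a = a := max_eq_right h2'.le
              rw [this] at hb1'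
              linarith [hb1'.2]
          have : abar = L := by rw [habar, min_eq_right haL.le, max_eq_right h0L]
          rw [hbb, this, abs_sub_le_iff]
          have : b ≤ max 0 a := hb1'.2
          rw [max_eq_right (by linarith : (0:ℝ) ≤ a)] at this
          constructor <;> linarith
    rw [hSdef, Metric.mem_thickening_iff]
    refine ⟨(abar, bbar), hTri, ?_⟩
    rw [Prod.dist_eq]
    have e1 : dist a' abar ≤ 2 * η := by
      rw [Real.dist_eq]
      calc |a' - abar| ≤ |a' - a| + |a - abar| := abs_sub_le _ _ _
        _ ≤ 2 * η := by linarith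
    have e2 : dist b' bbar ≤ 2 * η := by
      rw [Real.dist_eq]
      calc |b' - bbar| ≤ |b' - b| + |b - bbar| := abs_sub_le _ _ _
        _ ≤ 2 * η := by linarith
    have : (2:ℝ) * η < ε := by rw [hηdef]; linarith
    exact max_lt (lt_of_le_of_lt e1 this) (lt_of_le_of_lt e2 this)
  -- smoothness of k's partial derivatives
  have hk3' : ContDiffOn ℝ 1 (Function.uncurry k) S := hk3.of_le (by norm_num)
  have hk1 : ContDiffOn ℝ 2 (Function.uncurry (pd1 k)) S :=
    contDiffOn_pd1 hS hk3 (by norm_num)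
  have hk2 : ContDiffOn ℝ 2 (Function.uncurry (pd2 k)) S :=
    contDiffOn_pd2 hS hk3 (by norm_num)
  have hk1' : ContDiffOn ℝ 1 (Function.uncurry (pd1 k)) S := hk1.of_le (by norm_num)
  have hk2' : ContDiffOn ℝ 1 (Function.uncurry (pd2 k)) S := hk2.of_le (by norm_num)
  have hk11 : ContDiffOn ℝ 1 (Function.uncurry (pd1 (pd1 k))) S :=
    contDiffOn_pd1 hS hk1 (by norm_num)
  have hk21 : ContDiffOn ℝ 1 (Function.uncurry (pd2 (pd1 k))) S :=
    contDiffOn_pd2 hS hk1 (by norm_num)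
  have hk12 : ContDiffOn ℝ 1 (Function.uncurry (pd1 (pd2 k))) S :=
    contDiffOn_pd1 hS hk2 (by norm_num)
  have hk22 : ContDiffOn ℝ 1 (Function.uncurry (pd2 (pd2 k))) S :=
    contDiffOn_pd2 hS hk2 (by norm_num)
  have hk111 : ContDiffOn ℝ 0 (Function.uncurry (pd1 (pd1 (pd1 k)))) S :=
    contDiffOn_pd1 hS hk11 (by rw [zero_add])
  have hk222 : ContDiffOn ℝ 0 (Function.uncurry (pd2 (pd2 (pd2 k)))) S :=
    contDiffOn_pd2 hS hk22 (by rw [zero_add])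
  -- smoothness of u's partial derivatives
  have hu4 : ContDiffOn ℝ 4 (Function.uncurry u) (Set.univ : Set (ℝ × ℝ)) :=
    (hu.of_le (WithTop.coe_le_coe.mpr le_top)).contDiffOn
  have hu1 : ContDiffOn ℝ 3 (Function.uncurry (pd1 u)) (Set.univ : Set (ℝ × ℝ)) :=
    contDiffOn_pd1 isOpen_univ hu4 (by norm_num)
  have hu11 : ContDiffOn ℝ 2 (Function.uncurry (pd1 (pd1 u))) (Set.univ : Set (ℝ × ℝ)) :=
    contDiffOn_pd1 isOpen_univ hu1 (by norm_num)
  have hu111 : ContDiffOn ℝ 1 (Function.uncurry (pd1 (pd1 (pd1 u)))) (Set.univ : Set (ℝ × ℝ)) :=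
    contDiffOn_pd1 isOpen_univ hu11 (by norm_num)
  have hu2 : ContDiffOn ℝ 3 (Function.uncurry (pd2 u)) (Set.univ : Set (ℝ × ℝ)) :=
    contDiffOn_pd2 isOpen_univ hu4 (by norm_num)
  -- continuity of u's partial derivatives
  have hcU : Continuous (Function.uncurry u) := hu.continuous
  have hcU1 : Continuous (Function.uncurry (pd1 u)) := continuousOn_univ.1 hu1.continuousOn
  have hcU11 : Continuous (Function.uncurry (pd1 (pd1 u))) := continuousOn_univ.1 hu11.continuousOn
  have hcU111 : Continuous (Function.uncurry (pd1 (pd1 (pd1 u)))) :=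
    continuousOn_univ.1 hu111.continuousOn
  have hcU2 : Continuous (Function.uncurry (pd2 u)) := continuousOn_univ.1 hu2.continuousOn
  -- pointwise derivative facts for u (in the first variable)
  have hDu : ∀ (t' x' : ℝ), HasDerivAt (fun s => u s t') (pd1 u x' t') x' := fun t' x' =>
    pd1_hasDerivAt isOpen_univ hu4 (by norm_num) (Set.mem_univ _)
  have hDu1 : ∀ (t' x' : ℝ), HasDerivAt (fun s => pd1 u s t') (pd1 (pd1 u) x' t') x' := fun t' x' =>
    pd1_hasDerivAt isOpen_univ hu1 (by norm_num) (Set.mem_univ _)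
  have hDu11 : ∀ (t' x' : ℝ), HasDerivAt (fun s => pd1 (pd1 u) s t') (pd1 (pd1 (pd1 u)) x' t') x' :=
    fun t' x' => pd1_hasDerivAt isOpen_univ hu11 (by norm_num) (Set.mem_univ _)
  have hDut : ∀ (x' t' : ℝ), HasDerivAt (fun s => u x' s) (pd2 u x' t') t' := fun x' t' =>
    pd2_hasDerivAt isOpen_univ hu4 (by norm_num) (Set.mem_univ _)
  -- diagonal and slice membership
  have hIccsub : Set.Icc (0:ℝ) L ⊆ Set.Icc (-η) (L + η) := fun z hz =>
    ⟨by linarith [hz.1], by linarith [hz.2]⟩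
  have hdiagS : ∀ x' ∈ Set.Icc (-η) (L + η), ((x', x') : ℝ × ℝ) ∈ S := fun x' hx' =>
    hmemS x' x' x' x' hx'.1 hx'.2 Set.right_mem_uIcc (by simpa using hη.le) (by simpa using hη.le)
  have hsliceS : ∀ x' ∈ Set.Icc (-η) (L + η), ∀ y ∈ Set.uIcc (0:ℝ) x', ((x', y) : ℝ × ℝ) ∈ S :=
    fun x' hx' y hy => hmemS x' y x' y hx'.1 hx'.2 hy (by simpa using hη.le) (by simpa using hη.le)
  -- the key Leibniz-rule instance
  have hkey : ∀ (g : ℝ → ℝ → ℂ), ContDiffOn ℝ 1 (Function.uncurry g) S → ∀ t' : ℝ,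
      ∀ x' ∈ Set.Icc (-η) (L + η),
      HasDerivAt (fun s => ∫ y in (0:ℝ)..s, g s y * u y t')
        (g x' x' * u x' t' + ∫ y in (0:ℝ)..x', pd1 g x' y * u y t') x' := by
    intro g hg t' x' hx'
    have hucomp : ContDiff ℝ 1 (fun p : ℝ × ℝ => u p.2 t') :=
      (hu.of_le (by simp)).comp (contDiff_snd.prodMk contDiff_const)
    have hfC : ContDiffOn ℝ 1 (Function.uncurry (fun a b => g a b * u b t')) S :=
      hg.mul hucomp.contDiffOn
    have hmem' : ∀ a' b' : ℝ, |a' - x'| ≤ η → (∃ y ∈ Set.uIcc (0:ℝ) x', |b' - y| ≤ η) →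
        ((a', b') : ℝ × ℝ) ∈ S := by
      rintro a' b' h1 ⟨y, hy, h2⟩
      exact hmemS x' y a' b' hx'.1 hx'.2 hy h1 h2
    have H := leibniz_hasDerivAt (fun a b => g a b * u b t') hS hfC x' η hη hmem'
    have hcongr : Set.EqOn (fun y => pd1 (fun a b => g a b * u b t') x' y)
        (fun y => pd1 g x' y * u y t') (Set.uIcc (0:ℝ) x') := by
      intro y hy
      have hgd : HasDerivAt (fun s => g s y) (pd1 g x' y) x' :=
        pd1_hasDerivAt hS hg le_rfl (hsliceS x' hx' y hy)
      exact (hgd.mul_const (u y t')).deriv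
    rwa [intervalIntegral.integral_congr hcongr] at H
  -- first x-derivative of w
  have hw1 : ∀ t' : ℝ, ∀ x' ∈ Set.Icc (-η) (L + η),
      pd1 w x' t' = pd1 u x' t' - (k x' x' * u x' t' + ∫ y in (0:ℝ)..x', pd1 k x' y * u y t') := by
    intro t' x' hx'
    have hfun : (fun s => w s t') = fun s => u s t' - ∫ y in (0:ℝ)..s, k s y * u y t' :=
      funext fun s => hwdef s t'
    have H := (hDu t' x').sub (hkey k hk3' t' x' hx')
    show deriv (fun s => w s t') x' = _
    rw [hfun]
    exact H.deriv
  -- second x-derivative of w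
  have hw2 : ∀ t' : ℝ, ∀ x' ∈ Set.Ioo (-η) (L + η),
      pd1 (pd1 w) x' t' = pd1 (pd1 u) x' t' -
        ((pd1 k x' x' + pd2 k x' x') * u x' t' + k x' x' * pd1 u x' t'
          + (pd1 k x' x' * u x' t' + ∫ y in (0:ℝ)..x', pd1 (pd1 k) x' y * u y t')) := by
    intro t' x' hx'
    have hev : (fun s => pd1 w s t') =ᶠ[nhds x'] fun s =>
        pd1 u s t' - (k s s * u s t' + ∫ y in (0:ℝ)..s, pd1 k s y * u y t') := by
      filter_upwards [isOpen_Ioo.mem_nhds hx'] with s hs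
        using hw1 t' s (Set.Ioo_subset_Icc_self hs)
    have hx'' : x' ∈ Set.Icc (-η) (L + η) := Set.Ioo_subset_Icc_self hx'
    have hdg : HasDerivAt (fun s => k s s) (pd1 k x' x' + pd2 k x' x') x' :=
      diag_hasDerivAt hS hk3 (by norm_num) (hdiagS x' hx'')
    have H' := (hDu1 t' x').sub ((hdg.mul (hDu t' x')).add (hkey (pd1 k) hk1' t' x' hx''))
    show deriv (fun s => pd1 w s t') x' = _
    rw [hev.deriv_eq]
    exact H'.deriv
  -- third x-derivative of w
  have hw3 : ∀ t' : ℝ, ∀ x' ∈ Set.Icc (0:ℝ) L,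
      pd1 (pd1 (pd1 w)) x' t' = pd1 (pd1 (pd1 u)) x' t' -
        (((pd1 (pd1 k) x' x' + pd2 (pd1 k) x' x') + (pd1 (pd2 k) x' x' + pd2 (pd2 k) x' x')) * u x' t'
          + (pd1 k x' x' + pd2 k x' x') * pd1 u x' t'
          + ((pd1 k x' x' + pd2 k x' x') * pd1 u x' t' + k x' x' * pd1 (pd1 u) x' t')
          + ((pd1 (pd1 k) x' x' + pd2 (pd1 k) x' x') * u x' t' + pd1 k x' x' * pd1 u x' t')
          + (pd1 (pd1 k) x' x' * u x' t' + ∫ y in (0:ℝ)..x', pd1 (pd1 (pd1 k)) x' y * u y t')) := by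
    intro t' x' hx'
    have hxo : x' ∈ Set.Ioo (-η) (L + η) := ⟨by linarith [hx'.1, hη], by linarith [hx'.2, hη]⟩
    have hx'' : x' ∈ Set.Icc (-η) (L + η) := Set.Ioo_subset_Icc_self hxo
    have hev : (fun s => pd1 (pd1 w) s t') =ᶠ[nhds x'] fun s =>
        pd1 (pd1 u) s t' - ((pd1 k s s + pd2 k s s) * u s t' + k s s * pd1 u s t'
          + (pd1 k s s * u s t' + ∫ y in (0:ℝ)..s, pd1 (pd1 k) s y * u y t')) := by
      filter_upwards [isOpen_Ioo.mem_nhds hxo] with s hs using hw2 t' s hs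
    have hdg : HasDerivAt (fun s => k s s) (pd1 k x' x' + pd2 k x' x') x' :=
      diag_hasDerivAt hS hk3 (by norm_num) (hdiagS x' hx'')
    have hdg1 : HasDerivAt (fun s => pd1 k s s) (pd1 (pd1 k) x' x' + pd2 (pd1 k) x' x') x' :=
      diag_hasDerivAt hS hk1 (by norm_num) (hdiagS x' hx'')
    have hdg2 : HasDerivAt (fun s => pd2 k s s) (pd1 (pd2 k) x' x' + pd2 (pd2 k) x' x') x' :=
      diag_hasDerivAt hS hk2 (by norm_num) (hdiagS x' hx'')
    have H := (hDu11 t' x').sub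
      ((((hdg1.add hdg2).mul (hDu t' x')).add (hdg.mul (hDu1 t' x'))).add
        ((hdg1.mul (hDu t' x')).add (hkey (pd1 (pd1 k)) hk11 t' x' hx'')))
    show deriv (fun s => pd1 (pd1 w) s t') x' = _
    rw [hev.deriv_eq]
    refine H.deriv.trans ?_
    simp only [Pi.add_apply]
    ring
  -- continuity of diagonal functions
  have hdiagCont : ∀ (g : ℝ → ℝ → ℂ), ContDiffOn ℝ 1 (Function.uncurry g) S →
      ∀ x' ∈ Set.Icc (-η) (L + η), ContinuousAt (fun s => g s s) x' := by
    intro g hg x' hx'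
    have c1 : ContinuousAt (Function.uncurry g) (x', x') :=
      (hg.continuousOn.continuousAt (hS.mem_nhds (hdiagS x' hx')))
    exact ContinuousAt.comp (f := fun s : ℝ => ((s : ℝ), (s : ℝ))) c1 ((continuous_id.prodMk continuous_id).continuousAt)
  -- k(x,x) = 0 gives pd1 k + pd2 k = 0 on the diagonal
  have d2all : ∀ x' ∈ Set.Icc (0:ℝ) L, pd1 k x' x' + pd2 k x' x' = 0 := by
    intro x' hx'
    have hint : ∀ s ∈ Set.Ioo (0:ℝ) L, pd1 k s s + pd2 k s s = 0 := by
      intro s hs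
      have hsI : s ∈ Set.Icc (-η) (L + η) := hIccsub (Set.Ioo_subset_Icc_self hs)
      have hdg : HasDerivAt (fun a => k a a) (pd1 k s s + pd2 k s s) s :=
        diag_hasDerivAt hS hk3 (by norm_num) (hdiagS s hsI)
      have hev : (fun a => (0:ℂ)) =ᶠ[nhds s] fun a => k a a := by
        filter_upwards [isOpen_Ioo.mem_nhds hs] with a ha
          using ((hkbc a (Set.Ioo_subset_Icc_self ha)).1).symm
      exact ((hdg.congr_of_eventuallyEq hev).unique (hasDerivAt_const s (0:ℂ)))
    have hca : ContinuousAt (fun s => pd1 k s s + pd2 k s s) x' :=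
      ((hdiagCont (pd1 k) hk1' x' (hIccsub hx')).add (hdiagCont (pd2 k) hk2' x' (hIccsub hx')))
    exact eq_on_closure_Icc (h := fun s => pd1 k s s + pd2 k s s) hL hx' hca hint
  -- pd1 k(x,x) = r x/(3β) gives pd1 pd1 k + pd2 pd1 k = r/(3β) on the diagonal
  have d3all : ∀ x' ∈ Set.Icc (0:ℝ) L,
      pd1 (pd1 k) x' x' + pd2 (pd1 k) x' x' = ((r / (3 * β) : ℝ) : ℂ) := by
    intro x' hx'
    have hint : ∀ s ∈ Set.Ioo (0:ℝ) L,
        pd1 (pd1 k) s s + pd2 (pd1 k) s s = ((r / (3 * β) : ℝ) : ℂ) := by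
      intro s hs
      have hsI : s ∈ Set.Icc (-η) (L + η) := hIccsub (Set.Ioo_subset_Icc_self hs)
      have hdg : HasDerivAt (fun a => pd1 k a a) (pd1 (pd1 k) s s + pd2 (pd1 k) s s) s :=
        diag_hasDerivAt hS hk1 (by norm_num) (hdiagS s hsI)
      have hev : (fun a : ℝ => ((r * a / (3 * β) : ℝ) : ℂ)) =ᶠ[nhds s] fun a => pd1 k a a := by
        filter_upwards [isOpen_Ioo.mem_nhds hs] with a ha
          using ((hkbc a (Set.Ioo_subset_Icc_self ha)).2.2).symm
      have hlin : HasDerivAt (fun a : ℝ => ((r * a / (3 * β) : ℝ) : ℂ))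
          ((r / (3 * β) : ℝ) : ℂ) s := by
        have h1 : HasDerivAt (fun a : ℝ => ((a : ℝ) : ℂ)) 1 s := by
          simpa using (hasDerivAt_id s).ofReal_comp
        have h2 := h1.const_mul ((r / (3 * β) : ℝ) : ℂ)
        have hfun : (fun a : ℝ => ((r * a / (3 * β) : ℝ) : ℂ))
            = fun a : ℝ => ((r / (3 * β) : ℝ) : ℂ) * ((a : ℝ) : ℂ) := by
          funext a; push_cast; ring
        rw [hfun]
        simpa using h2
      exact ((hdg.congr_of_eventuallyEq hev).unique hlin)
    have hca : ContinuousAt (fun s => pd1 (pd1 k) s s + pd2 (pd1 k) s s) x' :=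
      ((hdiagCont (pd1 (pd1 k)) hk11 x' (hIccsub hx')).add
        (hdiagCont (pd2 (pd1 k)) hk21 x' (hIccsub hx')))
    exact eq_on_closure_Icc (h := fun s => pd1 (pd1 k) s s + pd2 (pd1 k) s s) hL hx' hca hint
  -- symmetry of mixed partials on the diagonal
  have d5all : ∀ x' ∈ Set.Icc (0:ℝ) L, pd2 (pd1 k) x' x' = pd1 (pd2 k) x' x' := fun x' hx' =>
    pd_comm hS hk3 (by norm_num) (hdiagS x' (hIccsub hx'))
  -- cast arithmetic
  have hβc : ((β : ℝ) : ℂ) ≠ 0 := Complex.ofReal_ne_zero.mpr hβ.ne'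
  have hsig : 3 * (β : ℂ) * ((r / (3 * β) : ℝ) : ℂ) = (r : ℂ) := by
    push_cast
    field_simp
  -- the PDE for u extends to the closed rectangle
  have hpdeC : ∀ x' ∈ Set.Icc (0:ℝ) L, ∀ t' ∈ Set.Icc (0:ℝ) T,
      Complex.I * pd2 u x' t' + Complex.I * (β : ℂ) * pd1 (pd1 (pd1 u)) x' t'
        + (α : ℂ) * pd1 (pd1 u) x' t' + Complex.I * (δ : ℂ) * pd1 u x' t' = 0 := by
    have hcontE : Continuous (fun p : ℝ × ℝ =>
        Complex.I * pd2 u p.1 p.2 + Complex.I * (β : ℂ) * pd1 (pd1 (pd1 u)) p.1 p.2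
          + (α : ℂ) * pd1 (pd1 u) p.1 p.2 + Complex.I * (δ : ℂ) * pd1 u p.1 p.2) := by
      exact (((continuous_const.mul hcU2).add
        ((continuous_const.mul hcU111))).add (continuous_const.mul hcU11)).add
        (continuous_const.mul hcU1)
    have hsub : Set.Icc (0:ℝ) L ×ˢ Set.Icc (0:ℝ) T ⊆
        closure (Set.Ioo (0:ℝ) L ×ˢ Set.Ioo (0:ℝ) T) := by
      rw [closure_prod_eq, closure_Ioo hL.ne, closure_Ioo hT.ne]
    have hcl : closure (Set.Ioo (0:ℝ) L ×ˢ Set.Ioo (0:ℝ) T) ⊆ {p : ℝ × ℝ |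
        Complex.I * pd2 u p.1 p.2 + Complex.I * (β : ℂ) * pd1 (pd1 (pd1 u)) p.1 p.2
          + (α : ℂ) * pd1 (pd1 u) p.1 p.2 + Complex.I * (δ : ℂ) * pd1 u p.1 p.2 = 0} := by
      apply closure_minimal
      · rintro ⟨a, b⟩ ⟨ha, hb⟩
        exact hpde a ha b hb
      · exact isClosed_eq hcontE continuous_const
    intro x' hx' t' ht'
    have hmem2 : ((x', t') : ℝ × ℝ) ∈ Set.Icc (0:ℝ) L ×ˢ Set.Icc (0:ℝ) T := ⟨hx', ht'⟩
    exact hcl (hsub hmem2)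
  have hut : ∀ y ∈ Set.Icc (0:ℝ) L, ∀ t' ∈ Set.Icc (0:ℝ) T,
      pd2 u y t' = Complex.I * (α : ℂ) * pd1 (pd1 u) y t' - (β : ℂ) * pd1 (pd1 (pd1 u)) y t'
        - (δ : ℂ) * pd1 u y t' := by
    intro y hy t' ht'
    have := hpdeC y hy t' ht'
    have hI : Complex.I * Complex.I = -1 := Complex.I_mul_I
    linear_combination (-Complex.I) * this + (pd2 u y t' + (β:ℂ) * pd1 (pd1 (pd1 u)) y t' + (δ:ℂ) * pd1 u y t') * hI
  refine ⟨?_, ?_, ?_⟩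
  · -- main PDE identity for w
    intro x hx t ht
    have hxI : x ∈ Set.Icc (-η) (L + η) := hIccsub hx
    have hxO : x ∈ Set.Ioo (-η) (L + η) := ⟨by linarith [hx.1, hη], by linarith [hx.2, hη]⟩
    have hu0t : u 0 t = 0 := hbc0 t ht
    have huIcc : Set.uIcc (0:ℝ) x = Set.Icc (0:ℝ) x := Set.uIcc_of_le hx.1
    have d0 : k x x = 0 := (hkbc x hx).1
    have d0' : k x 0 = 0 := (hkbc x hx).2.1
    have d2 : pd1 k x x + pd2 k x x = 0 := d2all x hx
    have d3 : pd1 (pd1 k) x x + pd2 (pd1 k) x x = ((r / (3 * β) : ℝ) : ℂ) := d3all x hx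
    have d5 : pd2 (pd1 k) x x = pd1 (pd2 k) x x := d5all x hx
    have hI : Complex.I * Complex.I = -1 := Complex.I_mul_I
    -- continuity of t-slices of u and its derivatives
    have hcu : Continuous fun y => u y t := hcU.comp (continuous_id.prodMk continuous_const)
    have hcu1 : Continuous fun y => pd1 u y t :=
      hcU1.comp (continuous_id.prodMk continuous_const)
    have hcu11 : Continuous fun y => pd1 (pd1 u) y t :=
      hcU11.comp (continuous_id.prodMk continuous_const)
    have hcu111 : Continuous fun y => pd1 (pd1 (pd1 u)) y t :=
      hcU111.comp (continuous_id.prodMk continuous_const)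
    -- integrability of kernel-slice products
    have hGInt : ∀ (g : ℝ → ℝ → ℂ), ContinuousOn (Function.uncurry g) S →
        ∀ v : ℝ → ℂ, Continuous v →
        IntervalIntegrable (fun y => g x y * v y) volume (0:ℝ) x := by
      intro g hg v hv
      apply ContinuousOn.intervalIntegrable
      apply ContinuousOn.mul
      · exact hg.comp (Continuous.continuousOn (continuous_const.prodMk continuous_id))
          (fun y hy => hsliceS x hxI y hy)
      · exact hv.continuousOn
    -- integration by parts
    have hibp : ∀ (g : ℝ → ℝ → ℂ), ContDiffOn ℝ 1 (Function.uncurry g) S →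
        ∀ (v v' : ℝ → ℂ), (∀ y : ℝ, HasDerivAt v (v' y) y) → Continuous v → Continuous v' →
        (∫ y in (0:ℝ)..x, pd2 g x y * v y) + (∫ y in (0:ℝ)..x, g x y * v' y)
          = g x x * v x - g x 0 * v 0 := by
      intro g hg v v' hv hcv hcv'
      have hgy : ∀ y ∈ Set.uIcc (0:ℝ) x, HasDerivAt (fun y' => g x y') (pd2 g x y) y :=
        fun y hy => pd2_hasDerivAt hS hg le_rfl (hsliceS x hxI y hy)
      have hg2c : ContinuousOn (Function.uncurry (pd2 g)) S :=
        (contDiffOn_pd2 (m := 0) hS hg (by rw [zero_add])).continuousOn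
      have hint1 : IntervalIntegrable (fun y => pd2 g x y * v y) volume 0 x :=
        hGInt (pd2 g) hg2c v hcv
      have hint2 : IntervalIntegrable (fun y => g x y * v' y) volume 0 x :=
        hGInt g hg.continuousOn v' hcv'
      have hu'int : IntervalIntegrable (fun y => pd2 g x y) volume 0 x := by
        apply ContinuousOn.intervalIntegrable
        exact hg2c.comp (Continuous.continuousOn (continuous_const.prodMk continuous_id))
          (fun y hy => hsliceS x hxI y hy)
      have H := intervalIntegral.integral_deriv_mul_eq_sub (a := (0:ℝ)) (b := x)
        (u := fun y => g x y) (v := v) (u' := fun y => pd2 g x y) (v' := v')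
        hgy (fun y _ => hv y) hu'int (hcv'.intervalIntegrable _ _)
      rwa [intervalIntegral.integral_add hint1 hint2] at H
    -- the six integration-by-parts identities
    have G1 : (∫ y in (0:ℝ)..x, pd2 k x y * u y t) + (∫ y in (0:ℝ)..x, k x y * pd1 u y t)
        = 0 := by
      have h := hibp k hk3' (fun y => u y t) (fun y => pd1 u y t) (fun y => hDu t y) hcu hcu1
      simpa [d0, d0', hu0t] using h
    have G2 : (∫ y in (0:ℝ)..x, pd2 k x y * pd1 u y t)
        + (∫ y in (0:ℝ)..x, k x y * pd1 (pd1 u) y t) = 0 := by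
      have h := hibp k hk3' (fun y => pd1 u y t) (fun y => pd1 (pd1 u) y t)
        (fun y => hDu1 t y) hcu1 hcu11
      simpa [d0, d0'] using h
    have G3 : (∫ y in (0:ℝ)..x, pd2 k x y * pd1 (pd1 u) y t)
        + (∫ y in (0:ℝ)..x, k x y * pd1 (pd1 (pd1 u)) y t) = 0 := by
      have h := hibp k hk3' (fun y => pd1 (pd1 u) y t) (fun y => pd1 (pd1 (pd1 u)) y t)
        (fun y => hDu11 t y) hcu11 hcu111
      simpa [d0, d0'] using h
    have G4 : (∫ y in (0:ℝ)..x, pd2 (pd2 k) x y * u y t)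
        + (∫ y in (0:ℝ)..x, pd2 k x y * pd1 u y t) = pd2 k x x * u x t := by
      have h := hibp (pd2 k) hk2' (fun y => u y t) (fun y => pd1 u y t)
        (fun y => hDu t y) hcu hcu1
      simpa [hu0t] using h
    have G5 : (∫ y in (0:ℝ)..x, pd2 (pd2 k) x y * pd1 u y t)
        + (∫ y in (0:ℝ)..x, pd2 k x y * pd1 (pd1 u) y t)
        = pd2 k x x * pd1 u x t - pd2 k x 0 * pd1 u 0 t :=
      hibp (pd2 k) hk2' (fun y => pd1 u y t) (fun y => pd1 (pd1 u) y t)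
        (fun y => hDu1 t y) hcu1 hcu11
    have G6 : (∫ y in (0:ℝ)..x, pd2 (pd2 (pd2 k)) x y * u y t)
        + (∫ y in (0:ℝ)..x, pd2 (pd2 k) x y * pd1 u y t) = pd2 (pd2 k) x x * u x t := by
      have h := hibp (pd2 (pd2 k)) hk22 (fun y => u y t) (fun y => pd1 u y t)
        (fun y => hDu t y) hcu hcu1
      simpa [hu0t] using h
    -- the kernel PDE integrated against u
    have KC : (β:ℂ) * ((∫ y in (0:ℝ)..x, pd1 (pd1 (pd1 k)) x y * u y t)
          + (∫ y in (0:ℝ)..x, pd2 (pd2 (pd2 k)) x y * u y t))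
        - Complex.I * (α:ℂ) * ((∫ y in (0:ℝ)..x, pd1 (pd1 k) x y * u y t)
          - (∫ y in (0:ℝ)..x, pd2 (pd2 k) x y * u y t))
        + (δ:ℂ) * ((∫ y in (0:ℝ)..x, pd1 k x y * u y t)
          + (∫ y in (0:ℝ)..x, pd2 k x y * u y t))
        + (r:ℂ) * (∫ y in (0:ℝ)..x, k x y * u y t) = 0 := by
      have i111 := hGInt (pd1 (pd1 (pd1 k))) hk111.continuousOn _ hcu
      have i222 := hGInt (pd2 (pd2 (pd2 k))) hk222.continuousOn _ hcu
      have i11 := hGInt (pd1 (pd1 k)) hk11.continuousOn _ hcu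
      have i22 := hGInt (pd2 (pd2 k)) hk22.continuousOn _ hcu
      have i1 := hGInt (pd1 k) hk1'.continuousOn _ hcu
      have i2 := hGInt (pd2 k) hk2'.continuousOn _ hcu
      have i0 := hGInt k hk3.continuousOn _ hcu
      have hzero : (∫ y in (0:ℝ)..x,
          ((β:ℂ) * (pd1 (pd1 (pd1 k)) x y * u y t + pd2 (pd2 (pd2 k)) x y * u y t)
            - Complex.I * (α:ℂ) * (pd1 (pd1 k) x y * u y t - pd2 (pd2 k) x y * u y t)
            + (δ:ℂ) * (pd1 k x y * u y t + pd2 k x y * u y t)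
            + (r:ℂ) * (k x y * u y t))) = 0 := by
        rw [intervalIntegral.integral_congr (g := fun _ => (0:ℂ)) ?_]
        · simp
        · intro y hy
          have hky := hkpde (x, y) (by
            rw [huIcc] at hy
            exact ⟨hy.1, hy.2, hx.2⟩)
          simp only at hky
          linear_combination (u y t) * hky
      rw [intervalIntegral.integral_add (((i111.add i222).const_mul _).sub
            (((i11.sub i22).const_mul _))|>.add ((i1.add i2).const_mul _)) (i0.const_mul _),
          intervalIntegral.integral_add (((i111.add i222).const_mul _).sub
            (((i11.sub i22).const_mul _))) ((i1.add i2).const_mul _),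
          intervalIntegral.integral_sub ((i111.add i222).const_mul _)
            ((i11.sub i22).const_mul _),
          intervalIntegral.integral_const_mul, intervalIntegral.integral_const_mul,
          intervalIntegral.integral_const_mul, intervalIntegral.integral_const_mul,
          intervalIntegral.integral_add i111 i222, intervalIntegral.integral_sub i11 i22,
          intervalIntegral.integral_add i1 i2] at hzero
      exact hzero
    -- t-derivative of w
    have hwt : pd2 w x t = pd2 u x t - ∫ y in (0:ℝ)..x, k x y * pd2 u y t := by
      have hfun : (fun s => w x s) = fun s => u x s - ∫ y in (0:ℝ)..x, k x y * u y s :=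
        funext fun s => hwdef x s
      have hS'' : IsOpen {p : ℝ × ℝ | ((x, p.2) : ℝ × ℝ) ∈ S} :=
        hS.preimage (continuous_const.prodMk continuous_snd)
      have hGC : ContDiffOn ℝ 1 (Function.uncurry (fun s y => k x y * u y s))
          {p : ℝ × ℝ | ((x, p.2) : ℝ × ℝ) ∈ S} := by
        apply ContDiffOn.mul
        · exact hk3'.comp ((contDiff_const.prodMk contDiff_snd).contDiffOn) (fun p hp => hp)
        · exact ((hu.of_le (by simp)).comp (contDiff_snd.prodMk contDiff_fst)).contDiffOn
      have hmem'' : ∀ s : ℝ, |s - t| ≤ η → ∀ y ∈ Set.uIcc (0:ℝ) x,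
          ((s, y) : ℝ × ℝ) ∈ {p : ℝ × ℝ | ((x, p.2) : ℝ × ℝ) ∈ S} :=
        fun s _ y hy => hsliceS x hxI y hy
      have H := param_hasDerivAt (fun s y => k x y * u y s) hS'' hGC x t η hη hmem''
      have hcongr : Set.EqOn (fun y => pd1 (fun s y => k x y * u y s) t y)
          (fun y => k x y * pd2 u y t) (Set.uIcc (0:ℝ) x) := by
        intro y _
        exact ((hDut y t).const_mul (k x y)).deriv
      rw [intervalIntegral.integral_congr hcongr] at H
      show deriv (fun s => w x s) t = _
      rw [hfun]
      exact ((hDut x t).sub H).deriv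
    -- substitute the PDE for u under the integral
    have hQ : (∫ y in (0:ℝ)..x, k x y * pd2 u y t)
        = Complex.I * (α:ℂ) * (∫ y in (0:ℝ)..x, k x y * pd1 (pd1 u) y t)
          - (β:ℂ) * (∫ y in (0:ℝ)..x, k x y * pd1 (pd1 (pd1 u)) y t)
          - (δ:ℂ) * (∫ y in (0:ℝ)..x, k x y * pd1 u y t) := by
      have m11 := hGInt k hk3.continuousOn _ hcu11
      have m111 := hGInt k hk3.continuousOn _ hcu111
      have m1 := hGInt k hk3.continuousOn _ hcu1
      have hcongr : Set.EqOn (fun y => k x y * pd2 u y t)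
          (fun y => Complex.I * (α:ℂ) * (k x y * pd1 (pd1 u) y t)
            - (β:ℂ) * (k x y * pd1 (pd1 (pd1 u)) y t)
            - (δ:ℂ) * (k x y * pd1 u y t)) (Set.uIcc (0:ℝ) x) := by
        intro y hy
        rw [huIcc] at hy
        have hyL : y ∈ Set.Icc (0:ℝ) L := ⟨hy.1, le_trans hy.2 hx.2⟩
        simp only
        rw [hut y hyL t ht]
        ring
      rw [intervalIntegral.integral_congr hcongr,
        intervalIntegral.integral_sub ((m11.const_mul _).sub (m111.const_mul _))
          (m1.const_mul _),
        intervalIntegral.integral_sub (m11.const_mul _) (m111.const_mul _),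
        intervalIntegral.integral_const_mul, intervalIntegral.integral_const_mul,
        intervalIntegral.integral_const_mul]
    -- simplified derivatives of w at (x,t)
    have H0 : w x t = u x t - ∫ y in (0:ℝ)..x, k x y * u y t := hwdef x t
    have H1 : pd1 w x t = pd1 u x t - ∫ y in (0:ℝ)..x, pd1 k x y * u y t := by
      rw [hw1 t x hxI, d0]
      ring
    have H2 : pd1 (pd1 w) x t = pd1 (pd1 u) x t - pd1 k x x * u x t
        - ∫ y in (0:ℝ)..x, pd1 (pd1 k) x y * u y t := by
      rw [hw2 t x hxO]
      linear_combination (-(u x t)) * d2 - pd1 u x t * d0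
    have H3 : pd1 (pd1 (pd1 w)) x t = pd1 (pd1 (pd1 u)) x t
        - ((pd1 (pd1 k) x x + pd2 (pd1 k) x x) + (pd1 (pd2 k) x x + pd2 (pd2 k) x x)) * u x t
        - (pd1 (pd1 k) x x + pd2 (pd1 k) x x) * u x t - pd1 k x x * pd1 u x t
        - pd1 (pd1 k) x x * u x t - ∫ y in (0:ℝ)..x, pd1 (pd1 (pd1 k)) x y * u y t := by
      rw [hw3 t x hx]
      linear_combination (-(2 * pd1 u x t)) * d2 - pd1 (pd1 u) x t * d0
    have PD := hpdeC x hx t ht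
    rw [hwt, H3, H2, H1, H0, hQ]
    linear_combination PD - Complex.I * Complex.I * (α:ℂ) * G2 + Complex.I * (β:ℂ) * G3
      + Complex.I * (δ:ℂ) * G1 + Complex.I * Complex.I * (α:ℂ) * G4 - Complex.I * (β:ℂ) * G5
      + Complex.I * (β:ℂ) * G6 - Complex.I * KC
      + (-(Complex.I * (β:ℂ) * pd1 u x t) - (α:ℂ) * u x t) * d2
      + (-(3 * Complex.I * (β:ℂ) * u x t)) * d3 - Complex.I * u x t * hsig
      + Complex.I * (β:ℂ) * u x t * d5
      + ((α:ℂ) * (pd2 k x x * u x t - ∫ y in (0:ℝ)..x, pd1 (pd1 k) x y * u y t)) * hI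
  · -- boundary values at x = 0
    intro t ht
    have h0I : (0:ℝ) ∈ Set.Icc (-η) (L + η) := ⟨by linarith, by linarith⟩
    constructor
    · rw [hwdef 0 t, intervalIntegral.integral_same, hbc0 t ht]
      ring
    · rw [hw1 t 0 h0I, intervalIntegral.integral_same, hbc0 t ht]
      ring
  · -- boundary values at x = L
    intro hbcL t ht
    have hLI : L ∈ Set.Icc (-η) (L + η) := ⟨by linarith, by linarith⟩
    constructor
    · rw [hwdef L t, ← (hbcL t ht).1]
      ring
    · rw [hw1 t L hLI, (hkbc L ⟨hL.le, le_rfl⟩).1, ← (hbcL t ht).2]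
      ring
end
end

section
/- Let β > 0, α, δ ∈ ℝ, r ∈ ℝ, L > 0, and let k be a controller backstepping kernel with parameter r. Define p(x,y) := k(L−y, L−x). Then p is an observer backstepping kernel with parameter r; that is, p is three times continuously differentiable on an open set containing Δ̄ and satisfies β(p_{xxx}+p_{yyy}) − iα(p_{xx}−p_{yy}) + δ(p_x+p_y) − r p = 0 on Δ̄, p(x,x) = 0 for all x ∈ [0,L], p(L,y) = 0 for all y ∈ [0,L], and p_x(x,x) = r(L−x)/(3β) for all x ∈ [0,L]. -/
noncomputable section

open MeasureTheory

/-- Observer backstepping kernel with parameter `r`. -/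
def IsObsKernel (β α δ r L : ℝ) (p : ℝ → ℝ → ℂ) : Prop :=
  (∃ U : Set (ℝ × ℝ), IsOpen U ∧ Tri L ⊆ U ∧ ContDiffOn ℝ 3 (Function.uncurry p) U) ∧
  (∀ q ∈ Tri L,
    (β : ℂ) * (pd1 (pd1 (pd1 p)) q.1 q.2 + pd2 (pd2 (pd2 p)) q.1 q.2)
      - Complex.I * (α : ℂ) * (pd1 (pd1 p) q.1 q.2 - pd2 (pd2 p) q.1 q.2)
      + (δ : ℂ) * (pd1 p q.1 q.2 + pd2 p q.1 q.2) - (r : ℂ) * p q.1 q.2 = 0) ∧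
  (∀ x ∈ Set.Icc (0:ℝ) L, p x x = 0) ∧
  (∀ y ∈ Set.Icc (0:ℝ) L, p L y = 0) ∧
  (∀ x ∈ Set.Icc (0:ℝ) L, pd1 p x x = ((r * (L - x) / (3 * β) : ℝ) : ℂ))

lemma refl_pd1 (L : ℝ) (f g : ℝ → ℝ → ℂ) (h : ∀ x y, f x y = g (L - y) (L - x)) :
    ∀ x y, pd1 f x y = -(pd2 g (L - y) (L - x)) := by
  intro x y
  have hfun : (fun x' => f x' y) = (fun x' => (fun u => g (L - y) u) (L - x')) :=
    funext fun x' => h x' y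
  rw [pd1, hfun, deriv_comp_const_sub]
  rfl

lemma refl_pd2 (L : ℝ) (f g : ℝ → ℝ → ℂ) (h : ∀ x y, f x y = g (L - y) (L - x)) :
    ∀ x y, pd2 f x y = -(pd1 g (L - y) (L - x)) := by
  intro x y
  have hfun : (fun y' => f x y') = (fun y' => (fun u => g u (L - x)) (L - y')) :=
    funext fun y' => h x y'
  rw [pd2, hfun]
  exact deriv_comp_const_sub (fun u => g u (L - x)) L y

lemma pd1_neg (g : ℝ → ℝ → ℂ) : ∀ x y, pd1 (fun a b => -(g a b)) x y = -(pd1 g x y) := by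
  intro x y; simp only [pd1]; exact deriv.neg

lemma pd2_neg (g : ℝ → ℝ → ℂ) : ∀ x y, pd2 (fun a b => -(g a b)) x y = -(pd2 g x y) := by
  intro x y; simp only [pd2]; exact deriv.neg

theorem stmt12 (β α δ r L : ℝ) (hβ : 0 < β) (hL : 0 < L)
    (k : ℝ → ℝ → ℂ) (hk : IsCtrlKernel β α δ r L k)
    (p : ℝ → ℝ → ℂ) (hpdef : ∀ x y : ℝ, p x y = k (L - y) (L - x)) :
    IsObsKernel β α δ r L p := by
  obtain ⟨⟨U, hUopen, hUsub, hUsmooth⟩, hpde, hbd⟩ := hk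
  -- reflected point stays in the triangle
  have hrefl : ∀ q ∈ Tri L, ((L - q.2, L - q.1) : ℝ × ℝ) ∈ Tri L := by
    rintro ⟨a, b⟩ ⟨h1, h2, h3⟩
    exact ⟨by simp; linarith, by simp; linarith, by simp; linarith⟩
  -- first derivatives
  have h1 : ∀ x y, pd1 p x y = -(pd2 k (L - y) (L - x)) := refl_pd1 L p k hpdef
  have h2 : ∀ x y, pd2 p x y = -(pd1 k (L - y) (L - x)) := refl_pd2 L p k hpdef
  -- second derivatives
  have h11 : ∀ x y, pd1 (pd1 p) x y = pd2 (pd2 k) (L - y) (L - x) := by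
    intro x y
    have := refl_pd1 L (pd1 p) (fun a b => -(pd2 k a b))
      (fun x y => h1 x y) x y
    rw [this, pd2_neg, neg_neg]
  have h22 : ∀ x y, pd2 (pd2 p) x y = pd1 (pd1 k) (L - y) (L - x) := by
    intro x y
    have := refl_pd2 L (pd2 p) (fun a b => -(pd1 k a b))
      (fun x y => h2 x y) x y
    rw [this, pd1_neg, neg_neg]
  -- third derivatives
  have h111 : ∀ x y, pd1 (pd1 (pd1 p)) x y = -(pd2 (pd2 (pd2 k)) (L - y) (L - x)) := by
    intro x y
    exact refl_pd1 L (pd1 (pd1 p)) (pd2 (pd2 k)) (fun x y => h11 x y) x y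
  have h222 : ∀ x y, pd2 (pd2 (pd2 p)) x y = -(pd1 (pd1 (pd1 k)) (L - y) (L - x)) := by
    intro x y
    exact refl_pd2 L (pd2 (pd2 p)) (pd1 (pd1 k)) (fun x y => h22 x y) x y
  -- diagonal derivative identity: pd2 k x x = -pd1 k x x on [0,L]
  have hdiag : ∀ x ∈ Set.Icc (0:ℝ) L, pd2 k x x = -(pd1 k x x) := by
    intro x hx
    have hxU : ((x, x) : ℝ × ℝ) ∈ U := hUsub ⟨hx.1, le_refl x, hx.2⟩
    have hdiff : DifferentiableAt ℝ (Function.uncurry k) (x, x) := by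
      have hd := (hUsmooth.differentiableOn (by norm_num)).differentiableAt
        (hUopen.mem_nhds hxU)
      exact hd
    set F := fderiv ℝ (Function.uncurry k) (x, x) with hF
    have hFd : HasFDerivAt (Function.uncurry k) F (x, x) := hdiff.hasFDerivAt
    have hc1 : HasDerivAt (fun x' : ℝ => (x', x)) ((1 : ℝ), (0 : ℝ)) x :=
      HasDerivAt.prodMk (hasDerivAt_id x) (hasDerivAt_const x x)
    have hc2 : HasDerivAt (fun y' : ℝ => (x, y')) ((0 : ℝ), (1 : ℝ)) x :=
      HasDerivAt.prodMk (hasDerivAt_const x x) (hasDerivAt_id x)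
    have hc3 : HasDerivAt (fun x' : ℝ => (x', x')) ((1 : ℝ), (1 : ℝ)) x :=
      HasDerivAt.prodMk (hasDerivAt_id x) (hasDerivAt_id x)
    have hd1 : HasDerivAt (fun x' => k x' x) (F (1, 0)) x := hFd.comp_hasDerivAt_of_eq x hc1 rfl
    have hd2 : HasDerivAt (fun y' => k x y') (F (0, 1)) x := hFd.comp_hasDerivAt_of_eq x hc2 rfl
    have hd3 : HasDerivAt (fun x' => k x' x') (F (1, 1)) x := hFd.comp_hasDerivAt_of_eq x hc3 rfl
    have hud : UniqueDiffWithinAt ℝ (Set.Icc (0:ℝ) L) x :=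
      (uniqueDiffOn_Icc hL) x hx
    have hz : HasDerivWithinAt (fun x' => k x' x') (0 : ℂ) (Set.Icc (0:ℝ) L) x := by
      have hconst : HasDerivWithinAt (fun _ : ℝ => (0 : ℂ)) 0 (Set.Icc (0:ℝ) L) x :=
        (hasDerivAt_const x (0:ℂ)).hasDerivWithinAt
      exact hconst.congr (fun y hy => (hbd y hy).1) ((hbd x hx).1)
    have hF11 : F (1, 1) = 0 := by
      have e1 := (hd3.hasDerivWithinAt (s := Set.Icc (0:ℝ) L)).derivWithin hud
      have e2 := hz.derivWithin hud
      rw [e1] at e2; exact e2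
    have hsum : F (1, 1) = F (1, 0) + F (0, 1) := by
      rw [← map_add]; norm_num
    have hp1 : pd1 k x x = F (1, 0) := hd1.deriv
    have hp2 : pd2 k x x = F (0, 1) := hd2.deriv
    rw [hp1, hp2]
    have h0 : F (1, 0) + F (0, 1) = 0 := by rw [← hsum]; exact hF11
    linear_combination h0
  refine ⟨?_, ?_, ?_, ?_, ?_⟩
  · -- smoothness
    set σ : ℝ × ℝ → ℝ × ℝ := fun q => (L - q.2, L - q.1) with hσ
    have hσcd : ContDiff ℝ 3 σ :=
      ContDiff.prodMk (contDiff_const.sub contDiff_snd) (contDiff_const.sub contDiff_fst)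
    refine ⟨σ ⁻¹' U, hUopen.preimage hσcd.continuous, ?_, ?_⟩
    · intro q hq
      exact hUsub (hrefl q hq)
    · have heq : Function.uncurry p = Function.uncurry k ∘ σ := by
        funext q; exact hpdef q.1 q.2
      rw [heq]
      exact hUsmooth.comp (hσcd.contDiffOn) (fun q hq => hq)
  · -- PDE
    rintro q hq
    have hE := hpde _ (hrefl q hq)
    dsimp only at hE
    rw [h111, h222, h11, h22, h1, h2, hpdef]
    linear_combination -hE
  · intro x hx
    rw [hpdef]
    exact (hbd (L - x) ⟨by linarith [hx.2], by linarith [hx.1]⟩).1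
  · intro y hy
    rw [hpdef]
    simp only [sub_self]
    exact (hbd (L - y) ⟨by linarith [hy.2], by linarith [hy.1]⟩).2.1
  · intro x hx
    have hmem : L - x ∈ Set.Icc (0:ℝ) L := ⟨by linarith [hx.2], by linarith [hx.1]⟩
    rw [h1, hdiag (L - x) hmem, neg_neg, (hbd (L - x) hmem).2.2]
end
end

section
/- Define u₀ : ℝ → ℂ by u₀(x) := 3 − e^{4ix} − 2e^{−2ix}. Then u₀(0) = 0, u₀(π) = 0, u₀′(π) = 0, and u₀ satisfies the ordinary differential equation i u₀‴(x) + 2 u₀″(x) + 8 i u₀′(x) = 0 for all x ∈ ℝ. In particular, the time-independent function u(x,t) := u₀(x) is a solution of the uncontrolled higher-order Schrödinger equation i u_t + iβ u_{xxx} + α u_{xx} + iδ u_x = 0 on (0,π) with β = 1, α = 2, δ = 8 and homogeneous boundary conditions u(0,t) = u(π,t) = u_x(π,t) = 0, whose L²-norm is constant in time. -/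
noncomputable section

open MeasureTheory

lemma hd_cexp (c : ℂ) (x : ℝ) :
    HasDerivAt (fun x : ℝ => Complex.exp (c * x)) (c * Complex.exp (c * x)) x := by
  have h1 : HasDerivAt (fun z : ℂ => Complex.exp (c * z)) (c * Complex.exp (c * x)) (x : ℂ) := by
    exact ((Complex.hasDerivAt_exp (c * x)).comp (x : ℂ)
      ((hasDerivAt_id (x : ℂ)).const_mul c)).congr_deriv (by ring)
  exact h1.comp_ofReal

lemma exp_four_pi : Complex.exp (4 * Complex.I * (Real.pi : ℂ)) = 1 := by
  rw [show (4 * Complex.I * (Real.pi : ℂ)) = ((2 : ℤ) : ℂ) * (2 * Real.pi * Complex.I) by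
    push_cast; ring]
  exact Complex.exp_int_mul_two_pi_mul_I 2

lemma exp_neg_two_pi : Complex.exp (-2 * Complex.I * (Real.pi : ℂ)) = 1 := by
  rw [show (-2 * Complex.I * (Real.pi : ℂ)) = ((-1 : ℤ) : ℂ) * (2 * Real.pi * Complex.I) by
    push_cast; ring]
  exact Complex.exp_int_mul_two_pi_mul_I (-1)

/-- first derivative -/
def f1 (x : ℝ) : ℂ := -(4 * Complex.I) * Complex.exp (4 * Complex.I * x)
    + 4 * Complex.I * Complex.exp (-2 * Complex.I * x)

/-- second derivative -/
def f2 (x : ℝ) : ℂ := 16 * Complex.exp (4 * Complex.I * x)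
    + 8 * Complex.exp (-2 * Complex.I * x)

/-- third derivative -/
def f3 (x : ℝ) : ℂ := 64 * Complex.I * Complex.exp (4 * Complex.I * x)
    - 16 * Complex.I * Complex.exp (-2 * Complex.I * x)

lemma hD1 (x : ℝ) : HasDerivAt (fun x : ℝ => 3 - Complex.exp (4 * Complex.I * (x : ℂ))
    - 2 * Complex.exp (-2 * Complex.I * (x : ℂ))) (f1 x) x := by
  have h := ((hasDerivAt_const x (3 : ℂ)).sub (hd_cexp (4 * Complex.I) x)).sub
      ((hd_cexp (-2 * Complex.I) x).const_mul 2)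
  refine h.congr_deriv ?_
  simp only [f1]; ring

lemma hD2 (x : ℝ) : HasDerivAt f1 (f2 x) x := by
  have h := ((hd_cexp (4 * Complex.I) x).const_mul (-(4 * Complex.I))).add
      ((hd_cexp (-2 * Complex.I) x).const_mul (4 * Complex.I))
  refine h.congr_deriv ?_
  simp only [f2]
  linear_combination -(16 * Complex.exp (4 * Complex.I * (x : ℂ))
    + 8 * Complex.exp (-2 * Complex.I * (x : ℂ))) * Complex.I_sq

lemma hD3 (x : ℝ) : HasDerivAt f2 (f3 x) x := by
  have h := ((hd_cexp (4 * Complex.I) x).const_mul (16 : ℂ)).add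
      ((hd_cexp (-2 * Complex.I) x).const_mul (8 : ℂ))
  refine h.congr_deriv ?_
  simp only [f3]; ring

lemma hODE (x : ℝ) : Complex.I * f3 x + 2 * f2 x + 8 * Complex.I * f1 x = 0 := by
  simp only [f1, f2, f3]
  linear_combination (32 * Complex.exp (4 * Complex.I * (x : ℂ))
    + 16 * Complex.exp (-2 * Complex.I * (x : ℂ))) * Complex.I_sq

lemma pd1_const_snd (g : ℝ → ℂ) : pd1 (fun x (_ : ℝ) => g x) = fun x _ => deriv g x := rfl

theorem stmt16 (u₀ : ℝ → ℂ)
    (hdef : ∀ x : ℝ, u₀ x = 3 - Complex.exp (4 * Complex.I * (x : ℂ))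
      - 2 * Complex.exp (-2 * Complex.I * (x : ℂ)))
    (u : ℝ → ℝ → ℂ) (hu : ∀ x t : ℝ, u x t = u₀ x) :
    u₀ 0 = 0 ∧ u₀ Real.pi = 0 ∧ deriv u₀ Real.pi = 0 ∧
    (∀ x : ℝ, Complex.I * iteratedDeriv 3 u₀ x + 2 * iteratedDeriv 2 u₀ x
      + 8 * Complex.I * deriv u₀ x = 0) ∧
    (∀ x t : ℝ, Complex.I * pd2 u x t + Complex.I * (1 : ℂ) * pd1 (pd1 (pd1 u)) x t
      + (2 : ℂ) * pd1 (pd1 u) x t + Complex.I * (8 : ℂ) * pd1 u x t = 0) ∧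
    (∀ t : ℝ, u 0 t = 0 ∧ u Real.pi t = 0 ∧ pd1 u Real.pi t = 0) ∧
    (∀ t : ℝ, (∫ x in (0:ℝ)..Real.pi, ‖u x t‖ ^ 2)
      = ∫ x in (0:ℝ)..Real.pi, ‖u x 0‖ ^ 2) := by
  have hu₀ : u₀ = fun x : ℝ => 3 - Complex.exp (4 * Complex.I * (x : ℂ))
      - 2 * Complex.exp (-2 * Complex.I * (x : ℂ)) := funext hdef
  have hD1' : ∀ x : ℝ, HasDerivAt u₀ (f1 x) x := by rw [hu₀]; exact hD1
  have hder1 : deriv u₀ = f1 := funext fun x => (hD1' x).deriv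
  have hder2 : deriv f1 = f2 := funext fun x => (hD2 x).deriv
  have hder3 : deriv f2 = f3 := funext fun x => (hD3 x).deriv
  have h0 : u₀ 0 = 0 := by
    rw [hdef]
    simp only [Complex.ofReal_zero, mul_zero, Complex.exp_zero]
    norm_num
  have hπ : u₀ Real.pi = 0 := by
    rw [hdef, exp_four_pi, exp_neg_two_pi]; ring
  have hπ' : deriv u₀ Real.pi = 0 := by
    rw [hder1]; unfold f1
    rw [exp_four_pi, exp_neg_two_pi]; ring
  have hufun : u = fun x (_ : ℝ) => u₀ x := by funext x t; exact hu x t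
  have hpd1 : pd1 u = fun x (_ : ℝ) => f1 x := by rw [hufun, pd1_const_snd, hder1]
  have hpd2' : pd1 (pd1 u) = fun x (_ : ℝ) => f2 x := by rw [hpd1, pd1_const_snd, hder2]
  have hpd3' : pd1 (pd1 (pd1 u)) = fun x (_ : ℝ) => f3 x := by
    rw [hpd2', pd1_const_snd, hder3]
  have hpd2 : pd2 u = fun _ _ => 0 := by
    funext x t; simp only [pd2, hufun]; exact deriv_const t _
  refine ⟨h0, hπ, hπ', ?_, ?_, ?_, ?_⟩
  · intro x
    rw [show (3 : ℕ) = 2 + 1 from rfl, iteratedDeriv_succ, iteratedDeriv_succ,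
      iteratedDeriv_one, hder1, hder2, hder3]
    exact hODE x
  · intro x t
    rw [hpd3', hpd2', hpd1, hpd2]
    linear_combination hODE x
  · intro t
    refine ⟨by rw [hu]; exact h0, by rw [hu]; exact hπ, ?_⟩
    rw [hpd1]
    simpa [hder1] using hπ'
  · intro t
    simp only [hu]
end
end

section
/- Let β > 0, α, δ ∈ ℝ, L > 0, and let φ : [0,L] → ℂ be three times continuously differentiable with φ(0) = 0, φ(L) = 0 and φ′(L) = 0. Then Re ∫₀ᴸ ( −β φ‴(x) + iα φ″(x) − δ φ′(x) ) · conj(φ(x)) dx = −(β/2) |φ′(0)|². -/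
noncomputable section

open MeasureTheory Complex

theorem stmt17 (β α δ L : ℝ) (hβ : 0 < β) (hL : 0 < L)
    (φ : ℝ → ℂ) (hφ : ContDiff ℝ 3 φ)
    (h0 : φ 0 = 0) (hLval : φ L = 0) (hLder : deriv φ L = 0) :
    (∫ x in (0:ℝ)..L,
        (-(β : ℂ) * iteratedDeriv 3 φ x + Complex.I * (α : ℂ) * iteratedDeriv 2 φ x
          - (δ : ℂ) * deriv φ x) * (starRingEnd ℂ) (φ x)).re
      = -(β / 2) * ‖deriv φ 0‖ ^ 2 := by
  set φ1 := deriv φ with hφ1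
  set φ2 := deriv φ1 with hφ2
  set φ3 := deriv φ2 with hφ3
  have hit2 : iteratedDeriv 2 φ = φ2 := by
    simp [iteratedDeriv_succ, iteratedDeriv_one, hφ1, hφ2]
  have hit3 : iteratedDeriv 3 φ = φ3 := by
    simp [iteratedDeriv_succ, iteratedDeriv_one, hφ1, hφ2, hφ3]
  have h3' : ContDiff ℝ (2+1) φ := by norm_num; exact hφ
  rw [contDiff_succ_iff_deriv] at h3'
  obtain ⟨hd1, -, hc2⟩ := h3'
  have h2' : ContDiff ℝ (1+1) φ1 := by norm_num; exact hc2
  rw [contDiff_succ_iff_deriv] at h2'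
  obtain ⟨hd2, -, hc1⟩ := h2'
  have hd3 : Differentiable ℝ φ2 := hc1.differentiable one_ne_zero
  have hcont3 : Continuous φ3 := hc1.continuous_deriv le_rfl
  have hcont2 : Continuous φ2 := hd3.continuous
  have hcont1 : Continuous φ1 := hd2.continuous
  have hcont0 : Continuous φ := hd1.continuous
  have hD0 : ∀ x, HasDerivAt φ (φ1 x) x := fun x => (hd1 x).hasDerivAt
  have hD1 : ∀ x, HasDerivAt φ1 (φ2 x) x := fun x => (hd2 x).hasDerivAt
  have hD2 : ∀ x, HasDerivAt φ2 (φ3 x) x := fun x => (hd3 x).hasDerivAt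
  rw [hit2, hit3]
  set f : ℝ → ℂ := fun x => (-(β:ℂ) * φ3 x + Complex.I * (α:ℂ) * φ2 x - (δ:ℂ) * φ1 x)
      * (starRingEnd ℂ) (φ x) with hf
  set Gc : ℝ → ℂ := fun x => -(β:ℂ) * (φ2 x * star (φ x)) + ((β/2 : ℝ) : ℂ) * (φ1 x * star (φ1 x))
      + (Complex.I * α) * (φ1 x * star (φ x)) - ((δ/2 : ℝ) : ℂ) * (φ x * star (φ x)) with hGcdef
  have hGd : ∀ x, HasDerivAt (fun x => (Gc x).re) ((f x).re) x := by
    intro x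
    have h1 : HasDerivAt (fun x => φ2 x * star (φ x)) (φ3 x * star (φ x) + φ2 x * star (φ1 x)) x :=
      (hD2 x).mul (hD0 x).star
    have h2 : HasDerivAt (fun x => φ1 x * star (φ1 x)) (φ2 x * star (φ1 x) + φ1 x * star (φ2 x)) x :=
      (hD1 x).mul (hD1 x).star
    have h3 : HasDerivAt (fun x => φ1 x * star (φ x)) (φ2 x * star (φ x) + φ1 x * star (φ1 x)) x :=
      (hD1 x).mul (hD0 x).star
    have h4 : HasDerivAt (fun x => φ x * star (φ x)) (φ1 x * star (φ x) + φ x * star (φ1 x)) x :=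
      (hD0 x).mul (hD0 x).star
    have hG : HasDerivAt Gc
        (-(β:ℂ) * (φ3 x * star (φ x) + φ2 x * star (φ1 x))
          + ((β/2 : ℝ) : ℂ) * (φ2 x * star (φ1 x) + φ1 x * star (φ2 x))
          + (Complex.I * α) * (φ2 x * star (φ x) + φ1 x * star (φ1 x))
          - ((δ/2 : ℝ) : ℂ) * (φ1 x * star (φ x) + φ x * star (φ1 x))) x :=
      (((h1.const_mul (-(β:ℂ))).add (h2.const_mul _)).add (h3.const_mul _)).sub (h4.const_mul _)
    have hre := Complex.reCLM.hasFDerivAt.comp_hasDerivAt x hG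
    convert hre using 1
    · rfl
    · rfl
    · rfl
    simp only [hf, Complex.reCLM_apply, Complex.add_re, Complex.sub_re, Complex.neg_re,
      Complex.mul_re, Complex.mul_im, Complex.add_im, Complex.sub_im, Complex.neg_im,
      Complex.I_re, Complex.I_im, Complex.ofReal_re, Complex.ofReal_im,
      RCLike.star_def, Complex.conj_re, Complex.conj_im]
    ring
  have hfc : Continuous f := by
    apply Continuous.mul
    · exact ((continuous_const.mul hcont3).add
        (continuous_const.mul hcont2)).sub (continuous_const.mul hcont1)
    · exact Complex.continuous_conj.comp hcont0
  have hint : IntervalIntegrable f volume 0 L := hfc.intervalIntegrable 0 L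
  have key : (∫ x in (0:ℝ)..L, f x).re = ∫ x in (0:ℝ)..L, (f x).re := by
    exact (ContinuousLinearMap.intervalIntegral_comp_comm Complex.reCLM hint).symm
  rw [key, intervalIntegral.integral_eq_sub_of_hasDerivAt (fun x _ => hGd x)
      ((Complex.continuous_re.comp hfc).intervalIntegrable 0 L)]
  have hφ1L : φ1 L = 0 := hLder
  have hGL : (Gc L).re = 0 := by simp [hGcdef, hLval, hφ1L]
  have hG0 : (Gc 0).re = (β/2) * ‖φ1 0‖ ^ 2 := by
    have : Gc 0 = ((β/2 : ℝ) : ℂ) * (φ1 0 * star (φ1 0)) := by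
      rw [hGcdef]; simp [h0]
    rw [this, RCLike.star_def, Complex.mul_conj]
    rw [← Complex.ofReal_mul]
    rw [Complex.ofReal_re]
    rw [Complex.sq_norm]
  rw [hGL, hG0]; ring
end
end

section
/- Let β > 0, α, δ ∈ ℝ, L > 0 and λ ∈ ℂ. Suppose there exists a three times continuously differentiable function φ : [0,L] → ℂ, not identically zero, such that −β φ‴(x) + iα φ″(x) − δ φ′(x) = λ φ(x) for all x ∈ (0,L) and φ(0) = φ′(0) = φ(L) = φ′(L) = 0. Then λ is purely imaginary (Re λ = 0), and there exist positive integers k and l such that α² + 3βδ = 4π²β²(k² + kl + l²)/L². In particular α² + 3βδ > 0 and L belongs to the set of critical lengths N = {2πβ√((k²+kl+l²)/(α²+3βδ)) : k, l positive integers}. -/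
noncomputable section

open MeasureTheory intervalIntegral Complex FourierTransform Real



lemma keylem (β α δ L : ℝ) (lam : ℂ) (φ : ℝ → ℂ) (hφ : ContDiff ℝ 3 φ)
    (hL : 0 < L)
    (hode : ∀ x ∈ Set.Ioo (0:ℝ) L,
      -(β : ℂ) * iteratedDeriv 3 φ x + Complex.I * (α : ℂ) * iteratedDeriv 2 φ x
        - (δ : ℂ) * deriv φ x = lam * φ x)
    (hb0 : φ 0 = 0) (hb0' : deriv φ 0 = 0) (hbL : φ L = 0) (hbL' : deriv φ L = 0) (s : ℂ) :
    ((β:ℂ)*s^3 - Complex.I*(α:ℂ)*s^2 + (δ:ℂ)*s + lam)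
        * (∫ x in (0:ℝ)..L, Complex.exp (-s*x) * φ x)
      = (β:ℂ) * (iteratedDeriv 2 φ 0 - iteratedDeriv 2 φ L * Complex.exp (-s*L)) := by
  set φ1 := deriv φ with hφ1
  set φ2 := iteratedDeriv 2 φ with hφ2
  set φ3 := iteratedDeriv 3 φ with hφ3
  have hd1 : Differentiable ℝ φ := hφ.differentiable (by norm_num)
  have hd2 : Differentiable ℝ φ1 := by
    have := hφ.differentiable_iteratedDeriv 1 (by norm_num)
    rwa [iteratedDeriv_one] at this
  have hd3 : Differentiable ℝ φ2 := hφ.differentiable_iteratedDeriv 2 (by norm_num)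
  have h1 : ∀ x : ℝ, HasDerivAt φ (φ1 x) x := fun x => (hd1 x).hasDerivAt
  have h2 : ∀ x : ℝ, HasDerivAt φ1 (φ2 x) x := by
    intro x
    have : φ2 = deriv φ1 := by
      rw [hφ2, hφ1, show (2:ℕ) = 1 + 1 from rfl, iteratedDeriv_succ, iteratedDeriv_one]
    rw [this]
    exact (hd2 x).hasDerivAt
  have h3 : ∀ x : ℝ, HasDerivAt φ2 (φ3 x) x := by
    intro x
    have : φ3 = deriv φ2 := by
      rw [hφ3, hφ2, show (3:ℕ) = 2 + 1 from rfl, iteratedDeriv_succ]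
    rw [this]
    exact (hd3 x).hasDerivAt
  have hc1 : Continuous φ1 := hd2.continuous
  have hc2 : Continuous φ2 := hd3.continuous
  have hc3 : Continuous φ3 := hφ.continuous_iteratedDeriv 3 (by norm_num)
  have hcφ : Continuous φ := hd1.continuous
  have hcexp : Continuous (fun x : ℝ => Complex.exp (-s*x)) := by
    fun_prop
  have hexp : ∀ x : ℝ, HasDerivAt (fun x : ℝ => Complex.exp (-s*x))
      (-s * Complex.exp (-s*x)) x := by
    intro x
    have hid : HasDerivAt (fun x : ℝ => ((x:ℝ):ℂ)) 1 x := (hasDerivAt_id x).ofReal_comp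
    have := ((hid.const_mul (-s)).cexp)
    simpa [mul_comm] using this
  -- the antiderivative
  set Ψ : ℝ → ℂ := fun x => Complex.exp (-s*x) *
      (-(β:ℂ) * φ2 x + (Complex.I*α - β*s) * φ1 x + (-(δ:ℂ) + Complex.I*α*s - β*s^2) * φ x)
    with hΨ
  have hΨd : ∀ x : ℝ, HasDerivAt Ψ
      (Complex.exp (-s*x) * (-(β:ℂ) * φ3 x + Complex.I*α * φ2 x - δ * φ1 x)
        + ((β:ℂ)*s^3 - Complex.I*α*s^2 + δ*s) * (Complex.exp (-s*x) * φ x)) x := by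
    intro x
    have hin : HasDerivAt (fun x => -(β:ℂ) * φ2 x + (Complex.I*α - β*s) * φ1 x
        + (-(δ:ℂ) + Complex.I*α*s - β*s^2) * φ x)
        (-(β:ℂ) * φ3 x + (Complex.I*α - β*s) * φ2 x
          + (-(δ:ℂ) + Complex.I*α*s - β*s^2) * φ1 x) x :=
      (((h3 x).const_mul _).add ((h2 x).const_mul _)).add ((h1 x).const_mul _)
    have := (hexp x).mul hin
    exact this.congr_deriv (by ring)
  have hint1 : IntervalIntegrable (fun x => Complex.exp (-s*x)
      * (-(β:ℂ) * φ3 x + Complex.I*α * φ2 x - δ * φ1 x)) volume 0 L := by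
    apply Continuous.intervalIntegrable
    fun_prop
  have hint2 : IntervalIntegrable (fun x => ((β:ℂ)*s^3 - Complex.I*α*s^2 + δ*s)
      * (Complex.exp (-s*x) * φ x)) volume 0 L := by
    apply Continuous.intervalIntegrable; fun_prop
  have heq : (∫ x in (0:ℝ)..L, (Complex.exp (-s*x) * (-(β:ℂ) * φ3 x + Complex.I*α * φ2 x - δ * φ1 x)
        + ((β:ℂ)*s^3 - Complex.I*α*s^2 + δ*s) * (Complex.exp (-s*x) * φ x)))
      = Ψ L - Ψ 0 :=
    integral_eq_sub_of_hasDerivAt (fun x _ => hΨd x) (hint1.add hint2)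
  rw [intervalIntegral.integral_add hint1 hint2] at heq
  -- first integral equals lam * ∫ exp * φ by the ODE
  have hae : ∀ᵐ x : ℝ, x ≠ L := by
    refine ae_iff.mpr ?_
    have : {a : ℝ | ¬a ≠ L} = {L} := by ext a; simp
    rw [this]; exact Real.volume_singleton
  have hcongr : (∫ x in (0:ℝ)..L, Complex.exp (-s*x)
        * (-(β:ℂ) * φ3 x + Complex.I*α * φ2 x - δ * φ1 x))
      = ∫ x in (0:ℝ)..L, Complex.exp (-s*x) * (lam * φ x) := by
    apply intervalIntegral.integral_congr_ae
    filter_upwards [hae] with x hx hxI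
    rw [Set.uIoc_of_le hL.le] at hxI
    have hxo : x ∈ Set.Ioo (0:ℝ) L := ⟨hxI.1, lt_of_le_of_ne hxI.2 hx⟩
    rw [hode x hxo]
  rw [hcongr] at heq
  have hlam : (∫ x in (0:ℝ)..L, Complex.exp (-s*x) * (lam * φ x))
      = lam * ∫ x in (0:ℝ)..L, Complex.exp (-s*x) * φ x := by
    rw [← intervalIntegral.integral_const_mul]
    congr 1; ext x; ring
  have hmul : (∫ x in (0:ℝ)..L, ((β:ℂ)*s^3 - Complex.I*α*s^2 + δ*s)
        * (Complex.exp (-s*x) * φ x))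
      = ((β:ℂ)*s^3 - Complex.I*α*s^2 + δ*s) * ∫ x in (0:ℝ)..L, Complex.exp (-s*x) * φ x :=
    intervalIntegral.integral_const_mul _ _
  rw [hlam, hmul] at heq
  have hΨL : Ψ L = Complex.exp (-s*L) * (-(β:ℂ) * φ2 L) := by
    simp only [hΨ, hbL, hbL']; ring
  have hΨ0 : Ψ 0 = -(β:ℂ) * φ2 0 := by
    simp only [hΨ, hb0, hb0']; norm_num
  rw [hΨL, hΨ0] at heq
  linear_combination heq


lemma vanish (L : ℝ) (hL : 0 < L) (φ : ℝ → ℂ) (hcφ : Continuous φ)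
    (hb0 : φ 0 = 0) (hbL : φ L = 0) (x y z : ℂ)
    (hkey : ∀ s : ℂ, (s - x) * (s - y) * (s - z)
      * (∫ t in (0:ℝ)..L, Complex.exp (-s*t) * φ t) = 0) :
    ∀ t ∈ Set.Icc (0:ℝ) L, φ t = 0 := by
  set g : ℝ → ℂ := fun t => φ (max 0 (min t L)) with hg
  have hgc : Continuous g := hcφ.comp (by fun_prop)
  have hgIcc : ∀ t ∈ Set.Icc (0:ℝ) L, g t = φ t := by
    intro t ht
    simp only [hg, min_eq_left ht.2, max_eq_right ht.1]
  have hg0 : ∀ t : ℝ, t ∉ Set.Ioc (0:ℝ) L → g t = 0 := by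
    intro t ht
    rcases le_or_gt t 0 with h | h
    · simp only [hg]
      rw [min_eq_left (h.trans hL.le), max_eq_left h, hb0]
    · have htL : L < t := by
        by_contra h'
        exact ht ⟨h, le_of_not_gt h'⟩
      simp only [hg, min_eq_right htL.le, max_eq_right hL.le, hbL]
  have hsupp : HasCompactSupport g := by
    apply HasCompactSupport.intro (isCompact_Icc (a := (0:ℝ)) (b := L))
    intro t ht
    exact hg0 t (fun h' => ht ⟨h'.1.le, h'.2⟩)
  have hgint : Integrable g := hgc.integrable_of_hasCompactSupport hsupp
  have hF : ∀ w : ℝ, 𝓕 g w = ∫ t in (0:ℝ)..L,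
      Complex.exp (-(((2*π*w : ℝ) : ℂ) * Complex.I)*t) * φ t := by
    intro w
    rw [Real.fourier_real_eq_integral_exp_smul]
    have h0 : ∀ v : ℝ, v ∉ Set.Ioc (0:ℝ) L →
        Complex.exp (↑(-2 * π * v * w) * Complex.I) • g v = 0 := by
      intro v hv; rw [hg0 v hv, smul_zero]
    rw [← MeasureTheory.setIntegral_eq_integral_of_forall_compl_eq_zero h0,
      ← intervalIntegral.integral_of_le hL.le]
    apply intervalIntegral.integral_congr
    intro v hv
    rw [Set.uIcc_of_le hL.le] at hv
    simp only [smul_eq_mul]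
    rw [hgIcc v hv]
    congr 1
    push_cast
    ring
  have hFJ : ∀ w : ℝ, 𝓕 g w = 0 := by
    have hinj : Function.Injective (fun w : ℝ => ((2*π*w : ℝ) : ℂ) * Complex.I) := by
      intro a b h
      have := mul_right_cancel₀ Complex.I_ne_zero h
      have h2 : (2*π*a : ℝ) = (2*π*b : ℝ) := by exact_mod_cast this
      have hπ : (2*π : ℝ) ≠ 0 := by positivity
      have : 2*π*a = 2*π*b := by linarith [h2]
      exact mul_left_cancel₀ hπ (by linarith)
    set S : Set ℝ := (fun w : ℝ => ((2*π*w : ℝ) : ℂ) * Complex.I) ⁻¹' {x, y, z} with hS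
    have hSfin : S.Finite :=
      Set.Finite.preimage hinj.injOn (Set.toFinite {x, y, z})
    have hoff : ∀ w ∉ S, 𝓕 g w = 0 := by
      intro w hw
      rw [hF w]
      set s : ℂ := ((2*π*w : ℝ) : ℂ) * Complex.I with hs
      have hx : s ≠ x ∧ s ≠ y ∧ s ≠ z := by
        simp only [hS, Set.mem_preimage, Set.mem_insert_iff, Set.mem_singleton_iff] at hw
        push_neg at hw
        exact hw
      have := hkey s
      rcases mul_eq_zero.mp this with h | h
      · exfalso
        rcases mul_eq_zero.mp h with h' | h'
        · rcases mul_eq_zero.mp h' with h'' | h''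
          · exact hx.1 (sub_eq_zero.mp h'')
          · exact hx.2.1 (sub_eq_zero.mp h'')
        · exact hx.2.2 (sub_eq_zero.mp h')
      · exact h
    have hdense : Dense Sᶜ := hSfin.countable.dense_compl ℝ
    have hFc : Continuous (𝓕 g) := by
      apply VectorFourier.fourierIntegral_continuous Real.continuous_fourierChar
        (by exact continuous_inner) hgint
    have : Set.EqOn (𝓕 g) (fun _ => 0) Sᶜ := fun w hw => hoff w hw
    have heq := Continuous.ext_on hdense hFc continuous_const this
    intro w; rw [heq]
  have hinv := hgc.fourierInv_fourier_eq hgint (by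
    have : 𝓕 g = fun _ => 0 := funext hFJ
    rw [this]; exact integrable_zero _ _ _)
  intro t ht
  rw [← hgIcc t ht, ← hinv]
  rw [show 𝓕 g = (fun _ => (0:ℂ)) from funext hFJ]
  simp [Real.fourierInv_eq]


lemma Ibd (L : ℝ) (hL : 0 < L) (φ : ℝ → ℂ) (hcφ : Continuous φ) (r : ℂ) :
    ∃ C, ∀ s ∈ Metric.ball r 1, ‖∫ t in (0:ℝ)..L, Complex.exp (-s*t) * φ t‖ ≤ C := by
  obtain ⟨M, hM⟩ := (isCompact_Icc (a := (0:ℝ)) (b := L)).exists_bound_of_continuousOn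
    hcφ.continuousOn
  set M' := max M 0 with hM'
  refine ⟨M' * Real.exp ((‖r‖+1)*L) * L, fun s hs => ?_⟩
  have hsn : ‖s‖ ≤ ‖r‖ + 1 := by
    have : dist s r < 1 := Metric.mem_ball.mp hs
    calc ‖s‖ = ‖r + (s - r)‖ := by ring_nf
    _ ≤ ‖r‖ + ‖s - r‖ := norm_add_le _ _
    _ ≤ ‖r‖ + 1 := by
        rw [← dist_eq_norm] at *
        linarith [this]
  have hb : ∀ t ∈ Set.uIoc (0:ℝ) L, ‖Complex.exp (-s*t) * φ t‖
      ≤ M' * Real.exp ((‖r‖+1)*L) := by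
    intro t ht
    rw [Set.uIoc_of_le hL.le] at ht
    rw [norm_mul]
    have h1 : ‖Complex.exp (-s*(t:ℂ))‖ ≤ Real.exp ((‖r‖+1)*L) := by
      rw [Complex.norm_exp]
      apply Real.exp_le_exp.mpr
      have : (-s*(t:ℂ)).re = -s.re * t := by
        simp [Complex.mul_re]
      rw [this]
      calc -s.re * t ≤ |s.re| * t := by
            apply mul_le_mul_of_nonneg_right (neg_le_abs s.re) ht.1.le
        _ ≤ ‖s‖ * t := by
            apply mul_le_mul_of_nonneg_right (Complex.abs_re_le_norm s) ht.1.le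
        _ ≤ (‖r‖+1) * L := by
            apply mul_le_mul hsn ht.2 ht.1.le (by positivity)
    have h2 : ‖φ t‖ ≤ M' := le_trans (hM t ⟨ht.1.le, ht.2⟩) (le_max_left _ _)
    calc ‖Complex.exp (-s*(t:ℂ))‖ * ‖φ t‖ ≤ Real.exp ((‖r‖+1)*L) * M' := by
          apply mul_le_mul h1 h2 (norm_nonneg _) (Real.exp_nonneg _)
      _ = M' * Real.exp ((‖r‖+1)*L) := by ring
  have := intervalIntegral.norm_integral_le_of_norm_le_const hb
  rw [sub_zero, abs_of_pos hL] at this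
  linarith [this]

lemma rootpair (L : ℝ) (hL : 0 < L) (A B r v : ℂ) (J : ℂ → ℂ)
    (hkey : ∀ s : ℂ, (s - r) * (s - r) * (s - v) * J s = A - B * Complex.exp (-s*L))
    (hbd : ∃ C, ∀ s ∈ Metric.ball r 1, ‖J s‖ ≤ C) : B = 0 ∧ A = 0 := by
  set H : ℂ → ℂ := fun s => A - B * Complex.exp (-s*L) with hH
  have hH0 : H r = 0 := by
    have := hkey r
    simp only [sub_self, zero_mul, mul_zero] at this
    exact this.symm
  have hd1 : HasDerivAt H (B * L * Complex.exp (-r*L)) r := by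
    have h1 : HasDerivAt (fun s : ℂ => -s * (L:ℂ)) (-(L:ℂ)) r := by
      simpa using ((hasDerivAt_id r).neg.mul_const (L:ℂ))
    have h2 := h1.cexp
    have h3 := (h2.const_mul B).const_sub A
    exact h3.congr_deriv (by ring)
  have hd2 : HasDerivAt H 0 r := by
    rw [hasDerivAt_iff_tendsto_slope]
    obtain ⟨C, hC⟩ := hbd
    set C' := max C 0 with hC'
    have hC'' : ∀ s ∈ Metric.ball r 1, ‖J s‖ ≤ C' := by
      intro s hs
      rcases (Metric.mem_ball.mp hs) with _
      exact le_trans (hC s hs) (le_max_left _ _)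
    have htend : Filter.Tendsto (fun s : ℂ => (s - r) * (s - v) * J s)
        (nhdsWithin r {r}ᶜ) (nhds 0) := by
      apply squeeze_zero_norm'
      · have hball : ∀ᶠ s in nhdsWithin r {r}ᶜ, s ∈ Metric.ball r 1 :=
          Filter.Eventually.filter_mono nhdsWithin_le_nhds
            (Metric.ball_mem_nhds r one_pos)
        filter_upwards [hball] with s hs
        calc ‖(s - r) * (s - v) * J s‖ = ‖s - r‖ * ‖s - v‖ * ‖J s‖ := by
              rw [norm_mul, norm_mul]
          _ ≤ ‖s - r‖ * ‖s - v‖ * C' := by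
              apply mul_le_mul_of_nonneg_left (hC'' s hs) (by positivity)
      · have : Filter.Tendsto (fun s : ℂ => ‖s - r‖ * ‖s - v‖ * C') (nhds r) (nhds 0) := by
          have hcont : Continuous (fun s : ℂ => ‖s - r‖ * ‖s - v‖ * C') := by fun_prop
          have := hcont.tendsto r
          simpa using this
        exact this.mono_left nhdsWithin_le_nhds
    apply htend.congr'
    have hmem : ∀ᶠ s in nhdsWithin r {r}ᶜ, s ≠ r :=
      eventually_mem_nhdsWithin.mono (fun s hs => hs)
    filter_upwards [hmem] with s hs
    rw [slope_def_field, hH0, sub_zero]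
    show (s - r) * (s - v) * J s = (A - B * Complex.exp (-s*L)) / (s - r)
    rw [← hkey s]
    have : s - r ≠ 0 := sub_ne_zero.mpr hs
    field_simp
  have huniq := hd1.unique hd2
  have hB : B = 0 := by
    have hexp := Complex.exp_ne_zero (-r*(L:ℂ))
    have hL' : (L:ℂ) ≠ 0 := by exact_mod_cast hL.ne'
    rcases mul_eq_zero.mp huniq with h | h
    · rcases mul_eq_zero.mp h with h' | h'
      · exact h'
      · exact absurd h' hL'
    · exact absurd h hexp
  refine ⟨hB, ?_⟩
  rw [hH, hB] at hH0
  simpa using hH0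


lemma intlem (n m : ℤ) (hn : n ≠ 0) (hm : m ≠ 0) (hnm : n + m ≠ 0) :
    ∃ k l : ℕ, 0 < k ∧ 0 < l ∧ ((k:ℤ)^2 + (k:ℤ)*(l:ℤ) + (l:ℤ)^2 = n^2 + n*m + m^2) := by
  have key : ∀ a b : ℤ, 0 < a → 0 < b → a^2 + a*b + b^2 = n^2 + n*m + m^2 →
      ∃ k l : ℕ, 0 < k ∧ 0 < l ∧ ((k:ℤ)^2 + (k:ℤ)*(l:ℤ) + (l:ℤ)^2 = n^2 + n*m + m^2) := by
    intro a b ha hb h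
    exact ⟨a.toNat, b.toNat, by omega, by omega, by
      rw [Int.toNat_of_nonneg ha.le, Int.toNat_of_nonneg hb.le]; exact h⟩
  rcases lt_trichotomy n 0 with hn' | hn' | hn' <;> rcases lt_trichotomy m 0 with hm' | hm' | hm'
  · exact key (-n) (-m) (by omega) (by omega) (by ring)
  · omega
  · rcases lt_trichotomy (n+m) 0 with h | h | h
    · exact key (-(n+m)) m (by omega) (by omega) (by ring)
    · omega
    · exact key (n+m) (-n) (by omega) (by omega) (by ring)
  · omega
  · omega
  · omega
  · rcases lt_trichotomy (n+m) 0 with h | h | h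
    · exact key (-(n+m)) n (by omega) (by omega) (by ring)
    · omega
    · exact key (n+m) (-m) (by omega) (by omega) (by ring)
  · omega
  · exact key n m hn' hm' (by ring)

theorem stmt18 (β α δ L : ℝ) (hβ : 0 < β) (hL : 0 < L) (lam : ℂ)
    (φ : ℝ → ℂ) (hφ : ContDiff ℝ 3 φ)
    (hnz : ∃ x ∈ Set.Icc (0:ℝ) L, φ x ≠ 0)
    (hode : ∀ x ∈ Set.Ioo (0:ℝ) L,
      -(β : ℂ) * iteratedDeriv 3 φ x + Complex.I * (α : ℂ) * iteratedDeriv 2 φ x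
        - (δ : ℂ) * deriv φ x = lam * φ x)
    (hb0 : φ 0 = 0) (hb0' : deriv φ 0 = 0) (hbL : φ L = 0) (hbL' : deriv φ L = 0) :
    lam.re = 0 ∧
    (∃ k l : ℕ, 0 < k ∧ 0 < l ∧
      α ^ 2 + 3 * β * δ
        = 4 * Real.pi ^ 2 * β ^ 2 * ((k : ℝ) ^ 2 + (k : ℝ) * (l : ℝ) + (l : ℝ) ^ 2) / L ^ 2) ∧
    0 < α ^ 2 + 3 * β * δ ∧
    (∃ k l : ℕ, 0 < k ∧ 0 < l ∧
      L = 2 * Real.pi * β *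
        Real.sqrt (((k : ℝ) ^ 2 + (k : ℝ) * (l : ℝ) + (l : ℝ) ^ 2) / (α ^ 2 + 3 * β * δ))) := by
  have hπ : (0:ℝ) < π := Real.pi_pos
  set J : ℂ → ℂ := fun s => ∫ t in (0:ℝ)..L, Complex.exp (-s*t) * φ t with hJdef
  set A := iteratedDeriv 2 φ 0 with hA
  set B := iteratedDeriv 2 φ L with hB
  have key := fun s => keylem β α δ L lam φ hφ hL hode hb0 hb0' hbL hbL' s
  have hβ' : (β:ℂ) ≠ 0 := by exact_mod_cast hβ.ne'
  have hL' : (L:ℂ) ≠ 0 := by exact_mod_cast hL.ne'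
  set P : Cubic ℂ := ⟨(β:ℂ), -(Complex.I*(α:ℂ)), (δ:ℂ), lam⟩ with hP
  have ha : P.a ≠ 0 := hβ'
  obtain ⟨x, y, z, h3⟩ := (Cubic.splits_iff_roots_eq_three (φ := RingHom.id ℂ) ha).mp
      (IsAlgClosed.splits _)
  have hfac : ∀ s : ℂ, (β:ℂ)*s^3 - Complex.I*α*s^2 + δ*s + lam
      = β*((s-x)*(s-y)*(s-z)) := by
    intro s
    have h := congrArg (Polynomial.eval s) (Cubic.eq_prod_three_roots ha h3)
    rw [Cubic.map_toPoly] at h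
    simp [Cubic.toPoly, hP] at h
    linear_combination h
  have hb := Cubic.b_eq_three_roots ha h3
  have hc := Cubic.c_eq_three_roots ha h3
  have hd := Cubic.d_eq_three_roots ha h3
  simp only [RingHom.id_apply, hP] at hb hc hd
  have key2 : ∀ s : ℂ, (s-x)*(s-y)*(s-z) * J s = A - B * Complex.exp (-s*L) := by
    intro s
    have h := key s
    rw [hfac s] at h
    apply mul_left_cancel₀ hβ'
    rw [hJdef]
    linear_combination h
  have hcφ : Continuous φ := hφ.continuous
  have hAB : ¬ (A = 0 ∧ B = 0) := by
    rintro ⟨hA0, hB0⟩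
    obtain ⟨x0, hx0, hx0ne⟩ := hnz
    apply hx0ne
    refine vanish L hL φ hcφ hb0 hbL x y z (fun s => ?_) x0 hx0
    show (s-x)*(s-y)*(s-z) * J s = 0
    rw [key2 s, hA0, hB0]
    ring
  have hbdx := fun r => Ibd L hL φ hcφ r
  have hxy : x ≠ y := by
    intro h
    subst h
    have h2 := rootpair L hL A B x z J key2 (hbdx x)
    exact hAB ⟨h2.2, h2.1⟩
  have hxz : x ≠ z := by
    intro h
    subst h
    have h2 := rootpair L hL A B x y J (fun s => by linear_combination key2 s) (hbdx x)
    exact hAB ⟨h2.2, h2.1⟩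
  have hyz : y ≠ z := by
    intro h
    subst h
    have h2 := rootpair L hL A B y x J (fun s => by linear_combination key2 s) (hbdx y)
    exact hAB ⟨h2.2, h2.1⟩
  have hrx : A = B * Complex.exp (-x*L) := by
    have := key2 x
    simp only [sub_self, zero_mul, mul_zero] at this
    linear_combination -this
  have hry : A = B * Complex.exp (-y*L) := by
    have := key2 y
    simp only [sub_self, zero_mul, mul_zero] at this
    linear_combination -this
  have hrz : A = B * Complex.exp (-z*L) := by
    have := key2 z
    simp only [sub_self, zero_mul, mul_zero] at this
    linear_combination -this
  have hBne : B ≠ 0 := by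
    intro h
    exact hAB ⟨by rw [hrx, h, zero_mul], h⟩
  obtain ⟨n, hn⟩ := Complex.exp_eq_exp_iff_exists_int.mp
    (mul_left_cancel₀ hBne (hrx.symm.trans hry))
  obtain ⟨m, hm⟩ := Complex.exp_eq_exp_iff_exists_int.mp
    (mul_left_cancel₀ hBne (hry.symm.trans hrz))
  have hyx : (y - x) * L = n * (2*(π:ℂ)*Complex.I) := by
    linear_combination hn
  have hzy : (z - y) * L = m * (2*(π:ℂ)*Complex.I) := by
    linear_combination hm
  have hzx : (z - x) * L = ((n:ℂ) + m) * (2*(π:ℂ)*Complex.I) := by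
    linear_combination hyx + hzy
  have h2π : (2*(π:ℂ)*Complex.I) ≠ 0 := by
    simp [Complex.I_ne_zero, Real.pi_ne_zero]
  have hn0 : n ≠ 0 := by
    intro h
    rw [h] at hyx
    simp only [Int.cast_zero, zero_mul] at hyx
    rcases mul_eq_zero.mp hyx with h' | h'
    · exact hxy (sub_eq_zero.mp h').symm
    · exact hL' h'
  have hm0 : m ≠ 0 := by
    intro h
    rw [h] at hzy
    simp only [Int.cast_zero, zero_mul] at hzy
    rcases mul_eq_zero.mp hzy with h' | h'
    · exact hyz (sub_eq_zero.mp h').symm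
    · exact hL' h'
  have hnm0 : n + m ≠ 0 := by
    intro h
    have : ((n:ℂ) + m) = 0 := by exact_mod_cast congrArg (fun t : ℤ => (t:ℂ)) h
    rw [this, zero_mul] at hzx
    rcases mul_eq_zero.mp hzx with h' | h'
    · exact hxz (sub_eq_zero.mp h').symm
    · exact hL' h'
  -- real parts
  have hyxre : y.re = x.re := by
    have h := congrArg Complex.re hyx
    simp [Complex.mul_re, Complex.mul_im, hL.ne'] at h
    linarith [h]
  have hzyre : z.re = y.re := by
    have h := congrArg Complex.re hzy
    simp [Complex.mul_re, Complex.mul_im, hL.ne'] at h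
    linarith [h]
  have hxre : x.re = 0 := by
    have h := congrArg Complex.re hb
    simp [Complex.mul_re, Complex.mul_im, hyxre, hzyre] at h
    rcases h with h | h
    · exact absurd h hβ.ne'
    · linarith
  have hyre : y.re = 0 := by rw [hyxre, hxre]
  have hzre : z.re = 0 := by rw [hzyre, hyre]
  have hlamre : lam.re = 0 := by
    have h := congrArg Complex.re hd
    simpa [Complex.mul_re, Complex.mul_im, hxre, hyre, hzre] using h
  -- main identity
  have e1 : Complex.I*(α:ℂ) = (β:ℂ)*(x+y+z) := by linear_combination -hb
  have hC : ((α:ℂ)^2 + 3*(β:ℂ)*(δ:ℂ)) * (L:ℂ)^2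
      = 4*(π:ℂ)^2*(β:ℂ)^2*((n:ℂ)^2 + (n:ℂ)*(m:ℂ) + (m:ℂ)^2) := by
    linear_combination
      (-(L:ℂ)^2*(Complex.I*(α:ℂ) + (β:ℂ)*(x+y+z))) * e1
      + (3*(β:ℂ)*(L:ℂ)^2) * hc
      + (-((β:ℂ)^2/2)*((y-x)*L + 2*(π:ℂ)*Complex.I*n + (z-x)*L + 2*(π:ℂ)*Complex.I*((n:ℂ)+m))) * hyx
      + (-((β:ℂ)^2/2)*((z-y)*L + 2*(π:ℂ)*Complex.I*m + (z-x)*L + 2*(π:ℂ)*Complex.I*((n:ℂ)+m))) * hzy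
      + ((α:ℂ)^2*(L:ℂ)^2 - 2*(π:ℂ)^2*(β:ℂ)^2*((n:ℂ)^2+(m:ℂ)^2+((n:ℂ)+m)^2)) * Complex.I_sq
  have hR : (α^2 + 3*β*δ) * L^2 = 4*π^2*β^2*((n:ℝ)^2 + (n:ℝ)*(m:ℝ) + (m:ℝ)^2) := by
    exact_mod_cast hC
  obtain ⟨k, l, hk, hl, hkl⟩ := intlem n m hn0 hm0 hnm0
  have hklR : ((k:ℝ)^2 + (k:ℝ)*(l:ℝ) + (l:ℝ)^2) = ((n:ℝ)^2 + (n:ℝ)*(m:ℝ) + (m:ℝ)^2) := by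
    exact_mod_cast hkl
  have hmain : α^2 + 3*β*δ = 4*π^2*β^2*((k:ℝ)^2 + (k:ℝ)*(l:ℝ) + (l:ℝ)^2)/L^2 := by
    rw [hklR]
    field_simp
    linarith [hR]
  have hVpos : (0:ℝ) < (k:ℝ)^2 + (k:ℝ)*(l:ℝ) + (l:ℝ)^2 := by positivity
  have hpos : 0 < α^2 + 3*β*δ := by
    rw [hmain]
    positivity
  refine ⟨hlamre, ⟨k, l, hk, hl, hmain⟩, hpos, ⟨k, l, hk, hl, ?_⟩⟩
  rw [hmain]
  have h1 : ((k:ℝ)^2 + (k:ℝ)*(l:ℝ) + (l:ℝ)^2) / (4*π^2*β^2*((k:ℝ)^2 + (k:ℝ)*(l:ℝ) + (l:ℝ)^2)/L^2)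
      = (L/(2*π*β))^2 := by
    rw [div_pow]
    field_simp
    ring
  rw [h1, Real.sqrt_sq (by positivity)]
  field_simp
end
end

section
/- Let β > 0 and α, δ ∈ ℝ with α² + 3βδ < 0, and let s ∈ ℂ. The cubic polynomial P(λ) = βλ³ − iαλ² + δλ + s has a repeated complex root (i.e. there exists λ ∈ ℂ with P(λ) = 0 and P′(λ) = 0) if and only if s = ± (2/(27β²))·(−(α²+3βδ))^{3/2} − i·(α/(27β²))·(2α² + 9βδ). In particular there are exactly two such values s₁⁻ and s₂⁻; they have equal imaginary parts Im(s₁⁻) = Im(s₂⁻) = −(α/(27β²))(2α²+9βδ) and opposite nonzero real parts Re(s₁⁻) = (2/(27β²))(−(α²+3βδ))^{3/2} = −Re(s₂⁻), so they are symmetric with respect to the imaginary axis. -/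
noncomputable section

theorem stmt19 (β α δ : ℝ) (hβ : 0 < β) (hcond : α ^ 2 + 3 * β * δ < 0) (s : ℂ) :
    ((∃ lam : ℂ,
        (β : ℂ) * lam ^ 3 - Complex.I * (α : ℂ) * lam ^ 2 + (δ : ℂ) * lam + s = 0 ∧
        deriv (fun z : ℂ =>
          (β : ℂ) * z ^ 3 - Complex.I * (α : ℂ) * z ^ 2 + (δ : ℂ) * z + s) lam = 0) ↔
      (s = (((2 / (27 * β ^ 2)) * (-(α ^ 2 + 3 * β * δ)) ^ ((3 : ℝ) / 2) : ℝ) : ℂ)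
            - Complex.I * (((α / (27 * β ^ 2)) * (2 * α ^ 2 + 9 * β * δ) : ℝ) : ℂ) ∨
       s = -(((2 / (27 * β ^ 2)) * (-(α ^ 2 + 3 * β * δ)) ^ ((3 : ℝ) / 2) : ℝ) : ℂ)
            - Complex.I * (((α / (27 * β ^ 2)) * (2 * α ^ 2 + 9 * β * δ) : ℝ) : ℂ))) ∧
    0 < (2 / (27 * β ^ 2)) * (-(α ^ 2 + 3 * β * δ)) ^ ((3 : ℝ) / 2) := by
  have hx : (0:ℝ) < -(α ^ 2 + 3 * β * δ) := by linarith
  set r : ℝ := Real.sqrt (-(α ^ 2 + 3 * β * δ)) with hrdef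
  have hrpos : 0 < r := Real.sqrt_pos.mpr hx
  have hr2 : r ^ 2 = -(α ^ 2 + 3 * β * δ) := Real.sq_sqrt hx.le
  have hpow : (-(α ^ 2 + 3 * β * δ)) ^ ((3 : ℝ) / 2) = r ^ 3 := by
    rw [show (3 : ℝ) / 2 = (1 / 2 : ℝ) * (3 : ℕ) by norm_num,
      Real.rpow_mul hx.le, Real.rpow_natCast, ← Real.sqrt_eq_rpow]
  have hB : ((β : ℂ)) ≠ 0 := by exact_mod_cast hβ.ne'
  have hR2 : ((r : ℂ)) ^ 2 = -(((α : ℂ)) ^ 2 + 3 * (β : ℂ) * (δ : ℂ)) := by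
    exact_mod_cast congrArg (Complex.ofReal) hr2
  have hI : Complex.I ^ 2 = -1 := Complex.I_sq
  have hderiv : ∀ lam : ℂ, deriv (fun z : ℂ =>
      (β : ℂ) * z ^ 3 - Complex.I * (α : ℂ) * z ^ 2 + (δ : ℂ) * z + s) lam
      = 3 * (β : ℂ) * lam ^ 2 - 2 * Complex.I * (α : ℂ) * lam + (δ : ℂ) := by
    intro lam
    have h := ((((hasDerivAt_pow 3 lam).const_mul ((β : ℂ))).sub
        ((hasDerivAt_pow 2 lam).const_mul (Complex.I * (α : ℂ)))).add
        ((hasDerivAt_id' lam).const_mul ((δ : ℂ)))).add_const s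
    exact h.deriv.trans (by push_cast; ring)
  constructor
  · rw [hpow]
    constructor
    · rintro ⟨lam, hE1, hE2⟩
      rw [hderiv lam] at hE2
      have hfac : (3 * (β : ℂ) * lam - (Complex.I * α + r)) *
          (3 * (β : ℂ) * lam - (Complex.I * α - r)) = 0 := by
        linear_combination 3 * (β : ℂ) * hE2 - hR2 + (α:ℂ)^2 * hI
      rcases mul_eq_zero.mp hfac with h2 | h2
      · left
        have hg : (27:ℂ) * β^2 * s
            = 2 * (r:ℂ)^3 - Complex.I * α * (2 * α^2 + 9 * β * δ) := by
          linear_combination (27 * (β:ℂ)^2) * hE1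
            + ((-(9 * (β:ℂ)^2 * lam^2 + 3 * (β:ℂ) * lam * (Complex.I * α + r)
                + (Complex.I * α + r)^2)
                + 3 * Complex.I * α * (3 * (β:ℂ) * lam + (Complex.I * α + r))
                - 9 * (β:ℂ) * δ)) * h2
            + (-3 * (r:ℂ)) * hR2
            + (2 * Complex.I * (α:ℂ)^3 + 3 * (α:ℂ)^2 * r) * hI
        push_cast
        field_simp
        linear_combination hg
      · right
        have hg : (27:ℂ) * β^2 * s
            = -(2 * (r:ℂ)^3) - Complex.I * α * (2 * α^2 + 9 * β * δ) := by
          linear_combination (27 * (β:ℂ)^2) * hE1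
            + ((-(9 * (β:ℂ)^2 * lam^2 + 3 * (β:ℂ) * lam * (Complex.I * α - r)
                + (Complex.I * α - r)^2)
                + 3 * Complex.I * α * (3 * (β:ℂ) * lam + (Complex.I * α - r))
                - 9 * (β:ℂ) * δ)) * h2
            + (3 * (r:ℂ)) * hR2
            + (2 * Complex.I * (α:ℂ)^3 - 3 * (α:ℂ)^2 * r) * hI
        push_cast
        field_simp
        linear_combination hg
    · rintro (hs | hs)
      · refine ⟨(Complex.I * α + r) / (3 * β), ?_, ?_⟩
        · rw [hs]; push_cast; field_simp
          linear_combination (81 * (r:ℂ)) * hR2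
            + (-81 * (α:ℂ)^2 * r - 54 * Complex.I * (α:ℂ)^3) * hI
        · rw [hderiv]
          field_simp
          linear_combination hR2 - (α:ℂ)^2 * hI
      · refine ⟨(Complex.I * α - r) / (3 * β), ?_, ?_⟩
        · rw [hs]; push_cast; field_simp
          linear_combination (-81 * (r:ℂ)) * hR2
            + (81 * (α:ℂ)^2 * r - 54 * Complex.I * (α:ℂ)^3) * hI
        · rw [hderiv]
          field_simp
          linear_combination hR2 - (α:ℂ)^2 * hI
  · rw [hpow]; positivity
end
end
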